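/- arXiv:2504.21655 — 8 statements merged into one kernel-verified Lean document; each statement's English description precedes it below -/
import Mathlib

section
/- For every integer t ≥ 2, the following identity of formal power series holds: Σ_{n≥0} b_{t,1}(n) q^n = ((q^t;q^t)_∞/(q;q)_∞) · ( q/(1−q) − q^t/(1−q^t) ). -/
open Finset PowerSeries

/-- Number of cells with hook length `k` in the Young diagram of the partition `p`
(rows sorted in nonincreasing order; the cell in row `i`, column `j` (0-indexed) has
hook length `λ_i + λ'_j - i - j - 1`). -/
def hooks {n : ℕ} (p : n.Partition) (k : ℕ) : ℕ :=
  ∑ i ∈ Finset.range ((p.parts.sort (· ≥ ·)).length),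
    ((Finset.range ((p.parts.sort (· ≥ ·)).getD i 0)).filter
      (fun j => (p.parts.sort (· ≥ ·)).getD i 0
        + ((p.parts.sort (· ≥ ·)).filter (fun x => j < x)).length - i - j - 1 = k)).card

/-- `b t k n`: total number of hooks of length `k` in all `t`-regular partitions of `n`. -/
def b (t k n : ℕ) : ℕ :=
  ∑ p ∈ Finset.univ.filter (fun p : n.Partition => ∀ x ∈ p.parts, ¬ t ∣ x), hooks p k

/-- The infinite product `(q^a ; q^d)_∞ = ∏_{i ≥ 0} (1 - q^{a + d·i})` as a formal power
series (for `a ≥ 1`): the coefficient of `q^n` in the partial products stabilizes, since the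
factors with `i > n` have valuation `> n`, so we may define the product coefficientwise. -/
noncomputable def qpoch (a d : ℕ) : PowerSeries ℚ :=
  PowerSeries.mk fun n =>
    PowerSeries.coeff (R := ℚ) n
      (∏ i ∈ Finset.range (n + 1), (1 - (PowerSeries.X : PowerSeries ℚ) ^ (a + d * i)))


/-! A cell has hook length one exactly when it is the last cell of its row and of its column, i.e.
the last cell of the last row of a given length; so `hooks p 1` is the number of distinct parts
of `p`. Removing one copy of a distinct part `y` of a `t`-regular partition of `n` leaves a
`t`-regular partition of `n - y`, hence `b t 1 n = ∑ #(t-regular partitions of n - y)` over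
`0 < y ≤ n` with `t ∤ y`: the product of the generating function of `t`-regular partitions with
`∑_{0 < y, t ∤ y} q^y = q/(1-q) - q^t/(1-q^t)`. Finally, by Glaisher's theorem `t`-regular
partitions are equinumerous with partitions in which no part occurs `t` times, whose generating
function is `∏_i (1 + q^i + ⋯ + q^{(t-1)i})`, and multiplying by `(q;q)_∞` turns each factor
into `1 - q^{ti}`. -/

def rowHooks (l : List ℕ) (i k : ℕ) : ℕ :=
  #{j ∈ range (l.getD i 0) | l.getD i 0 + (l.filter (fun x => j < x)).length - i - j - 1 = k}

theorem hooks_eq_sum_rowHooks {n : ℕ} (p : n.Partition) (k : ℕ) :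
    hooks p k =
      ∑ i ∈ range (p.parts.sort (· ≥ ·)).length, rowHooks (p.parts.sort (· ≥ ·)) i k :=
  rfl

theorem rowHooks_cons_succ {a : ℕ} {xs : List ℕ} (ha : ∀ x ∈ xs, x ≤ a) (i k : ℕ) :
    rowHooks (a :: xs) (i + 1) k = rowHooks xs i k := by
  rw [rowHooks, rowHooks, List.getD_cons_succ]
  congr 1
  refine filter_congr fun j hj => ?_
  have hja : j < a := by
    rw [mem_range] at hj
    by_cases hi : i < xs.length
    · rw [List.getD_eq_getElem _ _ hi] at hj
      exact hj.trans_le (ha _ (List.getElem_mem hi))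
    · rw [List.getD_eq_default _ _ (not_lt.mp hi)] at hj
      omega
  rw [List.filter_cons_of_pos (by simpa using hja), List.length_cons]
  omega

-- Only the last cell of the row can qualify; its leg vanishes iff no later row has length `a`.
theorem rowHooks_cons_zero_one {a : ℕ} {xs : List ℕ} (ha : ∀ x ∈ xs, x ≤ a)
    (hpos : 0 < a) :
    rowHooks (a :: xs) 0 1 = if a ∈ xs then 0 else 1 := by
  have hlen : ∀ j < a, ((a :: xs).filter (fun x => j < x)).length
      = (xs.filter (fun x => j < x)).length + 1 := fun j hj => by
    rw [List.filter_cons_of_pos (by simpa using hj), List.length_cons]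
  split_ifs with hmem
  · refine card_eq_zero.mpr (filter_eq_empty_iff.mpr fun j hj => ?_)
    rw [List.getD_cons_zero, mem_range] at hj
    rw [List.getD_cons_zero, hlen j hj]
    by_cases hj' : j = a - 1
    · have : a ∈ xs.filter (fun x => j < x) :=
        List.mem_filter.mpr ⟨hmem, decide_eq_true (by omega)⟩
      have := List.length_pos_of_mem this
      omega
    · omega
  · refine card_eq_one.mpr ⟨a - 1, ?_⟩
    ext j
    simp only [List.getD_cons_zero, mem_filter, mem_range, mem_singleton]
    have hempty : xs.filter (fun x => a - 1 < x) = [] :=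
      List.filter_eq_nil_iff.mpr fun x hx => by
        have := ha x hx
        have : x ≠ a := fun h => hmem (h ▸ hx)
        simp only [decide_eq_true_eq]
        omega
    constructor
    · rintro ⟨hj, h⟩
      rw [hlen j hj] at h
      omega
    · rintro rfl
      rw [hlen _ (by omega), hempty]
      simp only [List.length_nil]
      omega

theorem sum_rowHooks_one {l : List ℕ} (hl : l.Pairwise (· ≥ ·)) (hpos : ∀ x ∈ l, 0 < x) :
    ∑ i ∈ range l.length, rowHooks l i 1 = #l.toFinset := by
  induction l with
  | nil => simp
  | cons a xs ih =>
    obtain ⟨ha, hxs⟩ := List.pairwise_cons.mp hl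
    rw [List.length_cons, sum_range_succ',
      Finset.sum_congr rfl fun i _ => rowHooks_cons_succ ha i 1,
      ih hxs fun x hx => hpos x (List.mem_cons_of_mem _ hx),
      rowHooks_cons_zero_one ha (hpos a List.mem_cons_self), List.toFinset_cons]
    split_ifs with hmem
    · rw [insert_eq_of_mem (List.mem_toFinset.mpr hmem), add_zero]
    · rw [card_insert_of_notMem (mt List.mem_toFinset.mp hmem)]

theorem hooks_one {n : ℕ} (p : n.Partition) : hooks p 1 = #p.parts.toFinset := by
  rw [hooks_eq_sum_rowHooks, sum_rowHooks_one (p.parts.pairwise_sort _)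
    fun x hx => p.parts_pos ((Multiset.mem_sort _).mp hx)]
  congr 1
  ext x
  simp

namespace Nat.Partition

variable {P : ℕ → Prop} [DecidablePred P]

theorem card_filter_mem_parts_restricted {n y : ℕ} (hy : P y) (hy1 : 1 ≤ y) (hyn : y ≤ n) :
    #{q ∈ restricted n P | y ∈ q.parts} = #(restricted (n - y) P) := by
  let e := partitionWithPartEquiv hy1 hyn
  refine card_bij' (fun q hq => e ⟨q, (mem_filter.mp hq).2⟩) (fun r _ => (e.symm r).1)
    ?_ ?_ ?_ ?_
  · intro q hq
    simp only [restricted, mem_filter, mem_univ, true_and] at hq ⊢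
    intro x hx
    rw [partitionWithPartEquiv_apply_parts] at hx
    exact hq.1 x (Multiset.mem_of_mem_erase hx)
  · intro r hr
    simp only [restricted, mem_filter, mem_univ, true_and] at hr ⊢
    rw [partitionWithPartEquiv_symm_apply_parts]
    exact ⟨fun x hx => (Multiset.mem_cons.mp hx).elim (· ▸ hy) (hr x),
      Multiset.mem_cons_self _ _⟩
  · intro q _
    simp [e]
  · intro r _
    simp [e]

theorem sum_card_toFinset_parts_restricted (n : ℕ) :
    ∑ q ∈ restricted n P, #q.parts.toFinset =
      ∑ ij ∈ antidiagonal n, if 0 < ij.2 ∧ P ij.2 then #(restricted ij.1 P) else 0 := by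
  have hcard (q : n.Partition) :
      #q.parts.toFinset = ∑ y ∈ range (n + 1), if y ∈ q.parts then 1 else 0 := by
    rw [← card_filter]
    congr 1
    ext y
    simp only [Multiset.mem_toFinset, mem_filter, mem_range, iff_and_self]
    exact fun hy => Nat.lt_succ_of_le (le_of_mem_parts hy)
  rw [Finset.sum_congr rfl fun q _ => hcard q, sum_comm, ← Nat.sum_antidiagonal_swap,
    Nat.sum_antidiagonal_eq_sum_range_succ_mk]
  refine Finset.sum_congr rfl fun y hy => ?_
  rw [← card_filter]
  split_ifs with h
  · exact card_filter_mem_parts_restricted h.2 h.1 (Nat.le_of_lt_succ (mem_range.mp hy))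
  · refine Finset.card_eq_zero.mpr (filter_eq_empty_iff.mpr fun q hq hyq => ?_)
    exact h ⟨q.parts_pos hyq, (mem_filter.mp hq).2 y hyq⟩

end Nat.Partition

theorem X_pow_mul_inv_one_sub_X_pow {K : Type*} [Field K] {k : ℕ} (hk : 0 < k) :
    (X : K⟦X⟧) ^ k * (1 - X ^ k)⁻¹ = mk fun n => if 0 < n ∧ k ∣ n then 1 else 0 := by
  symm
  rw [eq_mul_inv_iff_mul_eq (by simp [hk.ne'])]
  ext n
  rw [mul_sub, mul_one, map_sub, coeff_mul_X_pow', coeff_mk, coeff_X_pow]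
  by_cases hkn : k ≤ n
  · obtain ⟨m, rfl⟩ := Nat.exists_eq_add_of_le hkn
    simp only [coeff_mk, Nat.add_sub_cancel_left, Nat.dvd_add_self_left, if_pos hkn]
    rcases m.eq_zero_or_pos with rfl | hm
    · simp [hk]
    · simp [hm, hm.ne', hk]
  · have : n ≠ k := by omega
    simp only [if_neg hkn, if_neg this, sub_zero]
    rw [if_neg]
    rintro ⟨hn, hdvd⟩
    exact hkn (Nat.le_of_dvd hn hdvd)

theorem X_mul_inv_one_sub_X_sub_X_pow_mul_inv_one_sub_X_pow {K : Type*} [Field K] {t : ℕ}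
    (ht : 0 < t) :
    (X : K⟦X⟧) * (1 - X)⁻¹ - X ^ t * (1 - X ^ t)⁻¹ =
      mk fun n => if 0 < n ∧ ¬ t ∣ n then 1 else 0 := by
  have h1 := X_pow_mul_inv_one_sub_X_pow (K := K) one_pos
  rw [pow_one] at h1
  rw [h1, X_pow_mul_inv_one_sub_X_pow ht]
  ext n
  simp only [map_sub, coeff_mk, one_dvd, and_true]
  split_ifs <;> simp_all

section PiTopology

open PowerSeries.WithPiTopology

theorem HasProd.coeff_eq_of_coeff_prod_range_eq {R : Type*} [CommSemiring R] [TopologicalSpace R]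
    [T2Space R] {f : ℕ → R⟦X⟧} {g : R⟦X⟧} (hf : HasProd f g) {n N : ℕ} {c : R}
    (hc : ∀ m ≥ N, coeff n (∏ i ∈ range m, f i) = c) : coeff n g = c :=
  tendsto_nhds_unique ((continuous_coeff R n).tendsto g |>.comp hf.tendsto_prod_nat)
    (tendsto_const_nhds.congr' (Filter.eventually_atTop.2 ⟨N, fun m hm => (hc m hm).symm⟩))

theorem coeff_prod_range_one_sub_X_pow_of_lt {R : Type*} [CommRing R] {a d n m : ℕ} (hd : 0 < d)
    (hm : n < m) :
    coeff n (∏ i ∈ range m, (1 - X ^ (a + d * i) : R⟦X⟧)) =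
      coeff n (∏ i ∈ range (n + 1), (1 - X ^ (a + d * i) : R⟦X⟧)) := by
  induction m, hm using Nat.le_induction with
  | base => rfl
  | succ m hm ih =>
    rw [prod_range_succ, mul_sub, mul_one, map_sub, coeff_mul_X_pow', if_neg (by nlinarith),
      sub_zero, ih]

theorem qpoch_eq_of_hasProd {a d : ℕ} (hd : 0 < d) {g : ℚ⟦X⟧}
    (h : HasProd (fun i => 1 - X ^ (a + d * i)) g) : qpoch a d = g :=
  PowerSeries.ext fun n => (coeff_mk _ _).trans (h.coeff_eq_of_coeff_prod_range_eq (N := n + 1)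
    fun _ hm => coeff_prod_range_one_sub_X_pow_of_lt hd hm).symm

theorem hasProd_one_sub_X_pow_mul_countRestricted (R : Type*) [CommRing R] [TopologicalSpace R]
    [T2Space R] [IsTopologicalRing R] {m : ℕ} (hm : 0 < m) :
    HasProd (fun i => (1 : R⟦X⟧) - X ^ ((i + 1) * m))
      ((mk fun n => (#(Nat.Partition.countRestricted n m) : R)) * ∏' i, (1 - X ^ (i + 1))) := by
  convert (Nat.Partition.hasProd_powerSeriesMk_card_countRestricted R hm).mul
    (multipliable_one_sub_X_pow R).hasProd using 2
  · rfl
  · funext i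
    simp_rw [pow_mul, geom_sum_mul_neg]

theorem mk_card_restricted_mul_qpoch_one_one {t : ℕ} (ht : 0 < t) :
    (mk fun n => (#(Nat.Partition.restricted n (¬ t ∣ ·)) : ℚ)) * qpoch 1 1 = qpoch t t := by
  have h1 : qpoch 1 1 = ∏' i, (1 - X ^ (i + 1)) :=
    qpoch_eq_of_hasProd one_pos (by simpa [add_comm] using (multipliable_one_sub_X_pow ℚ).hasProd)
  have h2 := qpoch_eq_of_hasProd ht
    (by convert hasProd_one_sub_X_pow_mul_countRestricted ℚ ht using 3; ring)
  simp_rw [h1, h2, Nat.Partition.card_restricted_eq_card_countRestricted _ ht]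

end PiTopology

theorem qpoch_mul_inv_qpoch_one_one {t : ℕ} (ht : 0 < t) :
    qpoch t t * (qpoch 1 1)⁻¹ =
      mk fun n => (#(Nat.Partition.restricted n (¬ t ∣ ·)) : ℚ) := by
  have hconst : constantCoeff (qpoch 1 1) ≠ 0 := by
    rw [← coeff_zero_eq_constantCoeff_apply, qpoch, coeff_mk]
    simp
  rw [← mk_card_restricted_mul_qpoch_one_one ht, mul_assoc, PowerSeries.mul_inv_cancel _ hconst,
    mul_one]

theorem genfun_bt1 (t : ℕ) (ht : 2 ≤ t) :
    PowerSeries.mk (fun n => (b t 1 n : ℚ)) =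
      qpoch t t * (qpoch 1 1)⁻¹ * (X * (1 - X)⁻¹ - X ^ t * (1 - X ^ t)⁻¹) := by
  have ht0 : 0 < t := by omega
  rw [qpoch_mul_inv_qpoch_one_one ht0, X_mul_inv_one_sub_X_sub_X_pow_mul_inv_one_sub_X_pow ht0]
  ext n
  have hb : b t 1 n = ∑ q ∈ Nat.Partition.restricted n (¬ t ∣ ·), #q.parts.toFinset :=
    Finset.sum_congr rfl fun q _ => hooks_one q
  rw [coeff_mk, coeff_mul, hb, Nat.Partition.sum_card_toFinset_parts_restricted]
  push_cast
  refine Finset.sum_congr rfl fun ij _ => ?_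
  simp only [coeff_mk, mul_ite, mul_one, mul_zero]
end

section
/- Let t ≥ 2 be an integer. For every integer n ≥ 192t^5 − 192t^4 − 24t^3 + 24t^2 + 6t + 2, the cardinality of O_t(n) is at most the cardinality of R_t(n); equivalently, there is an injection from O_t(n) into R_t(n). -/
open Finset
open scoped Classical

/-- `O_t(n)`: the `t`-regular partitions of `n` in which the part 1 appears an odd
number of times. -/
noncomputable def Ot (t n : ℕ) : Finset (Nat.Partition n) :=
  Finset.univ.filter fun p => (∀ x ∈ p.parts, ¬ t ∣ x) ∧ Odd (p.parts.count 1)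

/-- `R_t(n)`: the partitions of `n` in which the only multiple of `t` allowed as a part
is `2t`, and the part `2t + 1` appears at least once. -/
noncomputable def Rt (t n : ℕ) : Finset (Nat.Partition n) :=
  Finset.univ.filter fun p => (∀ x ∈ p.parts, t ∣ x → x = 2 * t) ∧ (2 * t + 1) ∈ p.parts

/-!
Every `p ∈ O_t(n)` is the image of some `q ∈ R_t(n)` under a single map `mergeParts`. The
partition `q` arises from `p` by one of four moves: none if `2t + 1` is already a part; merging
`2t + 1` ones into a part `2t + 1`; splitting a part `L ≥ 4t² + 4t` as `L = u (2t + 1) + w (2t)`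
with `1 ≤ u ≤ 2t` and `w ≥ 1`; or, when all parts are small and there are fewer than `2t` ones,
choosing by pigeonhole a part `v` whose copies add up to at least `8t³ + 16t²` and trading them
for `2t (v - 2)` ones together with more than `2t` parts `2t + 1` and at least one part `2t`.
As `p` has no part `2t`, the numbers of parts `2t`, `2t + 1` and `1` of `q` tell which move was
made, and undo it.
-/

open Multiset (replicate)

lemma exists_mul_add_mul_eq {t m : ℕ} (ht : 1 ≤ t) (hm : 4 * t ^ 2 + 4 * t ≤ m) :
    ∃ u w, 1 ≤ u ∧ u ≤ 2 * t ∧ 1 ≤ w ∧ u * (2 * t + 1) + w * (2 * t) = m := by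
  obtain ⟨q, r, hr, rfl⟩ : ∃ q r, r < 2 * t ∧ m = 2 * t * q + r + 1 :=
    ⟨(m - 1) / (2 * t), (m - 1) % (2 * t), Nat.mod_lt _ (by omega),
      by have := Nat.div_add_mod (m - 1) (2 * t); omega⟩
  have hq : r + 1 < q := by
    by_contra! hq
    nlinarith [Nat.mul_le_mul_left (2 * t) hq]
  obtain ⟨s, rfl⟩ := Nat.exists_eq_add_of_lt hq
  exact ⟨r + 1, s + 1, by omega, by omega, by omega, by ring⟩

lemma exists_lt_count_mul_of_lt_sum {P : Multiset ℕ} {N K : ℕ} (hpos : ∀ x ∈ P, 0 < x)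
    (hle : ∀ x ∈ P, x ≤ N) (hsum : P.count 1 + (N - 1) * K < P.sum) :
    ∃ v, 2 ≤ v ∧ v ≤ N ∧ K < P.count v * v := by
  by_contra! hsmall
  have hsub : P.toFinset ⊆ insert 1 (Icc 2 N) := by
    intro x hx
    rw [Multiset.mem_toFinset] at hx
    have := hpos x hx
    have := hle x hx
    rw [mem_insert, mem_Icc]
    omega
  have : P.sum ≤ P.count 1 + (N - 1) * K := calc
    P.sum = ∑ v ∈ insert 1 (Icc 2 N), P.count v * v := by
      simp only [Finset.sum_multiset_count_of_subset _ _ hsub, smul_eq_mul]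
    _ = P.count 1 + ∑ v ∈ Icc 2 N, P.count v * v := by
      rw [sum_insert (by simp), mul_one]
    _ ≤ P.count 1 + ∑ _v ∈ Icc 2 N, K := by
      gcongr with v hv
      exact hsmall v (mem_Icc.1 hv).1 (mem_Icc.1 hv).2
    _ = P.count 1 + (N - 1) * K := by simp [Nat.card_Icc]
  omega

lemma two_mul_add_mul_lt (t : ℕ) (ht : 2 ≤ t) :
    2 * t + (4 * t ^ 2 + 4 * t - 1 - 1) * (8 * t ^ 3 + 16 * t ^ 2 - 1)
      < 192 * t ^ 5 - 192 * t ^ 4 - 24 * t ^ 3 + 24 * t ^ 2 + 6 * t + 2 := by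
  have h1 : 1 ≤ 4 * t ^ 2 + 4 * t := by nlinarith
  have h2 : 1 ≤ 8 * t ^ 3 + 16 * t ^ 2 := by nlinarith
  have h3 : 192 * t ^ 4 ≤ 192 * t ^ 5 := by gcongr <;> omega
  have h4 : 24 * t ^ 3 ≤ 192 * t ^ 5 - 192 * t ^ 4 := by
    have : 2 * t ^ 4 ≤ t ^ 5 := by rw [pow_succ]; nlinarith [Nat.zero_le (t ^ 4)]
    have : t ^ 3 ≤ t ^ 4 := Nat.pow_le_pow_right (by omega) (by omega)
    omega
  have h1' : 1 ≤ 4 * t ^ 2 + 4 * t - 1 := by omega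
  zify [h1, h1', h2, h3, h4]
  have hs : (0 : ℤ) ≤ t - 2 := by omega
  nlinarith [pow_nonneg hs 5, pow_nonneg hs 4, pow_nonneg hs 3, pow_nonneg hs 2]

def blocks (t : ℕ) (Q : Multiset ℕ) : Multiset ℕ :=
  replicate (Q.count (2 * t + 1)) (2 * t + 1) + replicate (Q.count (2 * t)) (2 * t)

def mergeParts (t : ℕ) (Q : Multiset ℕ) : Multiset ℕ :=
  if Q.count (2 * t) = 0 then
    if Odd (Q.count 1) then Q else Q - {2 * t + 1} + replicate (2 * t + 1) 1
  else if Q.count (2 * t + 1) ≤ 2 * t then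
    Q - blocks t Q + {(blocks t Q).sum}
  else
    Q - (replicate (2 * t * (Q.count 1 / (2 * t))) 1 + blocks t Q) +
      replicate (((blocks t Q).sum + 2 * t * (Q.count 1 / (2 * t))) / (Q.count 1 / (2 * t) + 2))
        (Q.count 1 / (2 * t) + 2)

def IsRtPreimage (t : ℕ) (P Q : Multiset ℕ) : Prop :=
  (∀ x ∈ Q, 0 < x) ∧ Q.sum = P.sum ∧ (∀ x ∈ Q, t ∣ x → x = 2 * t) ∧ 2 * t + 1 ∈ Q ∧
    mergeParts t Q = P

section

variable {t : ℕ} {P : Multiset ℕ}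

lemma count_two_mul_eq_zero (hreg : ∀ x ∈ P, ¬ t ∣ x) : P.count (2 * t) = 0 :=
  Multiset.count_eq_zero.2 fun h => hreg _ h (dvd_mul_left t 2)

lemma isRtPreimage_tsub_add {A B : Multiset ℕ} (ht : 2 ≤ t) (hpos : ∀ x ∈ P, 0 < x)
    (hreg : ∀ x ∈ P, ¬ t ∣ x) (hA : A ≤ P) (hB : ∀ x ∈ B, x = 1 ∨ x = 2 * t ∨ x = 2 * t + 1)
    (hsum : B.sum = A.sum) (hmem : 2 * t + 1 ∈ B) (hmerge : mergeParts t (P - A + B) = P) :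
    IsRtPreimage t P (P - A + B) := by
  have hsub : ∀ x ∈ P - A, x ∈ P := fun x hx => Multiset.mem_of_le tsub_le_self hx
  refine ⟨fun x hx => ?_, ?_, fun x hx hdvd => ?_, Multiset.mem_add.2 (Or.inr hmem), hmerge⟩
  · rcases Multiset.mem_add.1 hx with hx | hx
    · exact hpos x (hsub x hx)
    · rcases hB x hx with rfl | rfl | rfl <;> omega
  · rw [Multiset.sum_add, hsum, ← Multiset.sum_add, tsub_add_cancel_of_le hA]
  · rcases Multiset.mem_add.1 hx with hx | hx
    · exact absurd hdvd (hreg x (hsub x hx))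
    · have hndvd : ¬ t ∣ 1 := Nat.not_dvd_of_pos_of_lt one_pos (by omega)
      rcases hB x hx with rfl | rfl | rfl
      · exact absurd hdvd hndvd
      · rfl
      · exact absurd ((Nat.dvd_add_right (dvd_mul_left t 2)).1 hdvd) hndvd

lemma isRtPreimage_self (hpos : ∀ x ∈ P, 0 < x) (hreg : ∀ x ∈ P, ¬ t ∣ x)
    (hodd : Odd (P.count 1)) (h : 2 * t + 1 ∈ P) : IsRtPreimage t P P :=
  ⟨hpos, rfl, fun x hx hdvd => absurd hdvd (hreg x hx), h, by
    rw [mergeParts, if_pos (count_two_mul_eq_zero hreg), if_pos hodd]⟩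

lemma isRtPreimage_of_le_count_one (ht : 2 ≤ t) (hpos : ∀ x ∈ P, 0 < x)
    (hreg : ∀ x ∈ P, ¬ t ∣ x) (hodd : Odd (P.count 1)) (h : 2 * t + 1 ≤ P.count 1) :
    IsRtPreimage t P (P - replicate (2 * t + 1) 1 + {2 * t + 1}) := by
  have hA : replicate (2 * t + 1) 1 ≤ P := Multiset.le_count_iff_replicate_le.1 h
  refine isRtPreimage_tsub_add ht hpos hreg hA (by simp) (by simp [add_comm]) (by simp) ?_
  have h2t : (P - replicate (2 * t + 1) 1 + {2 * t + 1}).count (2 * t) = 0 := by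
    simp [Multiset.count_replicate, count_two_mul_eq_zero hreg]
  have hc1 : (P - replicate (2 * t + 1) 1 + {2 * t + 1}).count 1 = P.count 1 - (2 * t + 1) := by
    simp [show t ≠ 0 by omega]
    omega
  have heven : ¬ Odd ((P - replicate (2 * t + 1) 1 + {2 * t + 1}).count 1) := by
    rw [hc1, Nat.odd_sub h]
    simp [hodd, parity_simps]
  rw [mergeParts, if_pos h2t, if_neg heven, add_tsub_cancel_right, tsub_add_cancel_of_le hA]

lemma exists_isRtPreimage_of_mem {L : ℕ} (ht : 2 ≤ t) (hpos : ∀ x ∈ P, 0 < x)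
    (hreg : ∀ x ∈ P, ¬ t ∣ x) (h2t1 : 2 * t + 1 ∉ P) (hL : L ∈ P) (hLbig : 4 * t ^ 2 + 4 * t ≤ L) :
    ∃ Q, IsRtPreimage t P Q := by
  obtain ⟨u, w, hu, hu', hw, hsplit⟩ := exists_mul_add_mul_eq (by omega) hLbig
  have hA : {L} ≤ P := Multiset.singleton_le.2 hL
  have hL2t : L ≠ 2 * t := by nlinarith
  have hL2t1 : L ≠ 2 * t + 1 := by nlinarith
  set B := replicate u (2 * t + 1) + replicate w (2 * t) with hB
  have hc2t1 : (P - {L} + B).count (2 * t + 1) = u := by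
    simp [hB, Multiset.count_replicate, Multiset.count_erase_of_ne hL2t1.symm,
      Multiset.count_eq_zero.2 h2t1]
  have hc2t : (P - {L} + B).count (2 * t) = w := by
    simp [hB, Multiset.count_replicate, Multiset.count_erase_of_ne hL2t.symm,
      count_two_mul_eq_zero hreg]
  refine ⟨P - {L} + B, isRtPreimage_tsub_add ht hpos hreg hA ?_ ?_ ?_ ?_⟩
  · simp only [hB, Multiset.mem_add, Multiset.mem_replicate]
    omega
  · simp [hB, Multiset.sum_replicate, hsplit]
  · exact Multiset.mem_add.2 (Or.inl (Multiset.mem_replicate.2 ⟨by omega, rfl⟩))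
  · rw [mergeParts, blocks, hc2t1, hc2t, if_neg (by omega), if_pos hu', ← hB,
      add_tsub_cancel_right, hB, Multiset.sum_add, Multiset.sum_replicate, Multiset.sum_replicate,
      smul_eq_mul, smul_eq_mul, hsplit, tsub_add_cancel_of_le hA]

lemma exists_isRtPreimage_of_le_count_mul {v : ℕ} (ht : 2 ≤ t) (hpos : ∀ x ∈ P, 0 < x)
    (hreg : ∀ x ∈ P, ¬ t ∣ x) (h2t1 : 2 * t + 1 ∉ P) (hone : P.count 1 < 2 * t) (hv : 2 ≤ v)
    (hvN : v < 4 * t ^ 2 + 4 * t) (hbig : 8 * t ^ 3 + 16 * t ^ 2 ≤ P.count v * v) :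
    ∃ Q, IsRtPreimage t P Q := by
  obtain ⟨v, rfl⟩ := Nat.exists_eq_add_of_le' hv
  set k := P.count (v + 2)
  have hvP : v + 2 ∈ P := Multiset.count_pos.1 (Nat.pos_of_ne_zero fun h0 : k = 0 => by
    rw [h0, zero_mul] at hbig; nlinarith)
  have hv2t : v + 2 ≠ 2 * t := fun h => hreg _ hvP (h ▸ dvd_mul_left t 2)
  have hM : 4 * t ^ 2 + 4 * t ≤ k * (v + 2) - 2 * t * v - 2 * t * (2 * t + 1) := by
    have := Nat.mul_le_mul_left (2 * t) hvN
    have : 2 * t * v + 2 * t * (2 * t + 1) + (4 * t ^ 2 + 4 * t) ≤ k * (v + 2) := by nlinarith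
    omega
  obtain ⟨u, w, hu, hu', hw, hsplit⟩ := exists_mul_add_mul_eq (by omega) hM
  have hA : replicate k (v + 2) ≤ P := Multiset.le_count_iff_replicate_le.1 le_rfl
  set B := replicate (2 * t * v) 1 + (replicate (2 * t + u) (2 * t + 1) + replicate w (2 * t))
    with hB
  have hblocks : (replicate (2 * t + u) (2 * t + 1) + replicate w (2 * t)).sum + 2 * t * v =
      k * (v + 2) := by
    simp only [Multiset.sum_add, Multiset.sum_replicate, smul_eq_mul]
    have : (2 * t + u) * (2 * t + 1) = 2 * t * (2 * t + 1) + u * (2 * t + 1) := by ring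
    omega
  have hc2t1 : (P - replicate k (v + 2) + B).count (2 * t + 1) = 2 * t + u := by
    simp [hB, Multiset.count_replicate, Multiset.count_eq_zero.2 h2t1]
    omega
  have hc2t : (P - replicate k (v + 2) + B).count (2 * t) = w := by
    simp [hB, Multiset.count_replicate, count_two_mul_eq_zero hreg]
    omega
  have hc1 : (P - replicate k (v + 2) + B).count 1 / (2 * t) = v := by
    have : (P - replicate k (v + 2) + B).count 1 = P.count 1 + 2 * t * v := by
      simp [hB, Multiset.count_replicate]
      omega
    rw [this, Nat.add_mul_div_left _ _ (by omega), Nat.div_eq_of_lt hone, zero_add]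
  refine ⟨P - replicate k (v + 2) + B, isRtPreimage_tsub_add ht hpos hreg hA ?_ ?_ ?_ ?_⟩
  · simp only [hB, Multiset.mem_add, Multiset.mem_replicate]
    omega
  · simp only [hB, Multiset.sum_add, Multiset.sum_replicate, smul_eq_mul] at hblocks ⊢
    omega
  · exact Multiset.mem_add.2 (Or.inr (Multiset.mem_add.2 (Or.inl
      (Multiset.mem_replicate.2 ⟨by omega, rfl⟩))))
  · rw [mergeParts, hc1, blocks, hc2t1, hc2t, if_neg (by omega), if_neg (by omega), ← hB,
      add_tsub_cancel_right, hblocks, Nat.mul_div_cancel _ (by omega), tsub_add_cancel_of_le hA]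

lemma exists_isRtPreimage (ht : 2 ≤ t) (hpos : ∀ x ∈ P, 0 < x) (hreg : ∀ x ∈ P, ¬ t ∣ x)
    (hodd : Odd (P.count 1))
    (hn : 192 * t ^ 5 - 192 * t ^ 4 - 24 * t ^ 3 + 24 * t ^ 2 + 6 * t + 2 ≤ P.sum) :
    ∃ Q, IsRtPreimage t P Q := by
  by_cases h2t1 : 2 * t + 1 ∈ P
  · exact ⟨P, isRtPreimage_self hpos hreg hodd h2t1⟩
  by_cases hone : 2 * t + 1 ≤ P.count 1
  · exact ⟨_, isRtPreimage_of_le_count_one ht hpos hreg hodd hone⟩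
  by_cases hL : ∃ L ∈ P, 4 * t ^ 2 + 4 * t ≤ L
  · obtain ⟨L, hL, hLbig⟩ := hL
    exact exists_isRtPreimage_of_mem ht hpos hreg h2t1 hL hLbig
  push Not at hone hL
  have hone' : P.count 1 < 2 * t := by
    obtain ⟨j, hj⟩ := hodd
    omega
  obtain ⟨v, hv, hvN, hbig⟩ := exists_lt_count_mul_of_lt_sum (N := 4 * t ^ 2 + 4 * t - 1)
    (K := 8 * t ^ 3 + 16 * t ^ 2 - 1) hpos (fun x hx => by have := hL x hx; omega)
    (by have := two_mul_add_mul_lt t ht; omega)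
  exact exists_isRtPreimage_of_le_count_mul ht hpos hreg h2t1 hone' hv (by omega) (by omega)

end

theorem card_Ot_le_card_Rt (t n : ℕ) (ht : 2 ≤ t)
    (hn : 192 * t ^ 5 - 192 * t ^ 4 - 24 * t ^ 3 + 24 * t ^ 2 + 6 * t + 2 ≤ n) :
    (Ot t n).card ≤ (Rt t n).card := by
  have hsurj : Set.SurjOn (fun q : Nat.Partition n => mergeParts t q.parts) (Rt t n)
      ((Ot t n).image Nat.Partition.parts) := by
    intro P hP
    obtain ⟨p, hp, rfl⟩ := mem_image.1 hP
    simp only [Ot, mem_filter, mem_univ, true_and] at hp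
    obtain ⟨Q, hQpos, hQsum, hQdvd, hQmem, hmerge⟩ :=
      exists_isRtPreimage ht (fun _ => p.parts_pos) hp.1 hp.2 (p.parts_sum.symm ▸ hn)
    exact ⟨⟨Q, hQpos _, hQsum.trans p.parts_sum⟩, mem_filter.2 ⟨mem_univ _, hQdvd, hQmem⟩, hmerge⟩
  calc (Ot t n).card = ((Ot t n).image Nat.Partition.parts).card :=
        (card_image_of_injective _ fun _ _ => Nat.Partition.ext).symm
    _ ≤ (Rt t n).card := card_le_card_of_surjOn _ hsurj
end

section
/- Let t ≥ 2 be an integer and n ≥ 0. The cardinality of O_t^2(n) is at most the cardinality of R_t^2(n); equivalently, there is an injection from O_t^2(n) into R_t^2(n). -/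
open Finset
open scoped Classical

/-- `O_t^2(n)`: partitions in `O_t(n)` with no part `> 1` congruent to `1 (mod 2t)`,
and largest part at least `8t² + 1`. -/
noncomputable def Ot2 (t n : ℕ) : Finset (Nat.Partition n) :=
  (Ot t n).filter fun p =>
    (∀ x ∈ p.parts, 1 < x → ¬ x ≡ 1 [MOD 2 * t]) ∧ 8 * t ^ 2 + 1 ≤ p.parts.sup

/-- `R_t^2(n)`: partitions in `R_t(n)` in which 1 appears an even number of times,
`f(2t+1) + f(4t+1) ≥ 2`, and `f(2kt+1) = 0` for all `k ≥ 3`. -/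
noncomputable def Rt2 (t n : ℕ) : Finset (Nat.Partition n) :=
  (Rt t n).filter fun p =>
    Even (p.parts.count 1) ∧ 2 ≤ p.parts.count (2 * t + 1) + p.parts.count (4 * t + 1) ∧
      ∀ k, 3 ≤ k → p.parts.count (2 * k * t + 1) = 0

/-
Take `λ ∈ O_t^2(n)` with largest part `L` and remove `L` together with one part `1` (there
is one since `f_λ(1)` is odd). Since `L + 1 ≥ (2t + 1)²`, one can write
`L + 1 = m (2t + 1) + c · 2t` with `2 ≤ m ≤ 2t + 1`; adding `m` parts `2t + 1` and `c` parts
`2t` gives a partition in `R_t^2(n)`. As `λ` has no part `2t` (it is `t`-regular) and no part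
`2t + 1` (no part `> 1` is `≡ 1 mod 2t`), `m` and `c` can be read off the image, hence so can
`L` and the remaining parts: the map is injective.
-/

lemma Multiset.sup_mem_of_ne_zero {α : Type*} [LinearOrder α] [OrderBot α] {s : Multiset α}
    (hs : s ≠ 0) : s.sup ∈ s := by
  induction s using Multiset.induction_on with
  | empty => exact absurd rfl hs
  | cons a s ih =>
    rw [Multiset.sup_cons]
    rcases eq_or_ne s 0 with rfl | hs
    · simp
    · exact sup_ind a s.sup (Multiset.mem_cons_self a s) (Multiset.mem_cons_of_mem (ih hs))

section Repack

variable {b N : ℕ}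

/-- With `numBase`, the coefficients `m, c` of `N = m (b + 1) + c b`: here `2 ≤ m ≤ b + 1` is
fixed by `m ≡ N [MOD b]`, and the subtraction defining `c` does not truncate as soon as
`(b + 1)² ≤ N`. -/
def numSucc (b N : ℕ) : ℕ := 2 + (N - 2) % b

def numBase (b N : ℕ) : ℕ := (N - 2) / b - numSucc b N

lemma two_le_numSucc (b N : ℕ) : 2 ≤ numSucc b N := Nat.le_add_right 2 _

lemma numSucc_le_div (hb : 0 < b) (hN : (b + 1) ^ 2 ≤ N) : numSucc b N ≤ (N - 2) / b := by
  have hdiv := Nat.div_add_mod (N - 2) b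
  have hmod := Nat.mod_lt (N - 2) hb
  unfold numSucc
  by_contra! hlt
  have hq : b * ((N - 2) / b) ≤ b * ((N - 2) % b + 1) := Nat.mul_le_mul_left b (by omega)
  have hr : b * ((N - 2) % b + 1) ≤ b * b := Nat.mul_le_mul_left b hmod
  have hsq : (b + 1) ^ 2 = b * b + 2 * b + 1 := by ring
  omega

lemma numSucc_mul_add_numBase_mul (hb : 0 < b) (hN : (b + 1) ^ 2 ≤ N) :
    numSucc b N * (b + 1) + numBase b N * b = N := by
  have hdiv := Nat.div_add_mod (N - 2) b
  have hle := numSucc_le_div hb hN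
  have h2 : 2 ≤ N := le_trans (by nlinarith) hN
  unfold numBase
  unfold numSucc at hle ⊢
  zify [hle, h2] at hdiv ⊢
  linear_combination hdiv

def repack (b N : ℕ) (r : Multiset ℕ) : Multiset ℕ :=
  r + Multiset.replicate (numSucc b N) (b + 1) + Multiset.replicate (numBase b N) b

lemma count_repack (x : ℕ) (r : Multiset ℕ) :
    (repack b N r).count x =
      r.count x + (if x = b + 1 then numSucc b N else 0) + (if x = b then numBase b N else 0) := by
  simp only [repack, Multiset.count_add, Multiset.count_replicate, eq_comm]

lemma mem_repack {x : ℕ} {r : Multiset ℕ} (hx : x ∈ repack b N r) :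
    x ∈ r ∨ x = b + 1 ∨ x = b := by
  simp only [repack, Multiset.mem_add] at hx
  rcases hx with (hx | hx) | hx
  · exact .inl hx
  · exact .inr (.inl (Multiset.eq_of_mem_replicate hx))
  · exact .inr (.inr (Multiset.eq_of_mem_replicate hx))

lemma sum_repack (hb : 0 < b) (hN : (b + 1) ^ 2 ≤ N) (r : Multiset ℕ) :
    (repack b N r).sum = r.sum + N := by
  simp only [repack, Multiset.sum_add, Multiset.sum_replicate, smul_eq_mul]
  linarith [numSucc_mul_add_numBase_mul hb hN]

lemma eq_and_eq_of_repack_eq (hb : 0 < b) {N' : ℕ} {r r' : Multiset ℕ} (hN : (b + 1) ^ 2 ≤ N)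
    (hN' : (b + 1) ^ 2 ≤ N') (hr : b ∉ r ∧ b + 1 ∉ r) (hr' : b ∉ r' ∧ b + 1 ∉ r')
    (h : repack b N r = repack b N' r') : N = N' ∧ r = r' := by
  have hsucc : numSucc b N = numSucc b N' := by
    simpa [count_repack, Multiset.count_eq_zero.mpr hr.2, Multiset.count_eq_zero.mpr hr'.2]
      using congrArg (Multiset.count (b + 1)) h
  have hbase : numBase b N = numBase b N' := by
    simpa [count_repack, Multiset.count_eq_zero.mpr hr.1, Multiset.count_eq_zero.mpr hr'.1]
      using congrArg (Multiset.count b) h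
  have hNN' : N = N' := by
    rw [← numSucc_mul_add_numBase_mul hb hN, ← numSucc_mul_add_numBase_mul hb hN', hsucc, hbase]
  subst hNN'
  exact ⟨rfl, add_right_cancel (add_right_cancel h)⟩

end Repack

section OtToRt

variable {t n : ℕ}

def eraseSupOne (s : Multiset ℕ) : Multiset ℕ := (s.erase s.sup).erase 1

def toRt2Parts (t : ℕ) (s : Multiset ℕ) : Multiset ℕ :=
  repack (2 * t) (s.sup + 1) (eraseSupOne s)

lemma mem_of_mem_eraseSupOne {s : Multiset ℕ} {x : ℕ} (hx : x ∈ eraseSupOne s) : x ∈ s :=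
  Multiset.mem_of_mem_erase (Multiset.mem_of_mem_erase hx)

lemma mem_Ot2 {p : Nat.Partition n} :
    p ∈ Ot2 t n ↔ ((∀ x ∈ p.parts, ¬ t ∣ x) ∧ Odd (p.parts.count 1)) ∧
      (∀ x ∈ p.parts, 1 < x → ¬ x ≡ 1 [MOD 2 * t]) ∧ 8 * t ^ 2 + 1 ≤ p.parts.sup := by
  simp only [Ot2, Ot, mem_filter, mem_univ, true_and]

lemma sq_le_sup_add_one_of_mem_Ot2 {p : Nat.Partition n} (hp : p ∈ Ot2 t n) :
    (2 * t + 1) ^ 2 ≤ p.parts.sup + 1 := by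
  have := (mem_Ot2.mp hp).2.2
  nlinarith

lemma one_lt_sup_of_mem_Ot2 (ht : 0 < t) {p : Nat.Partition n} (hp : p ∈ Ot2 t n) :
    1 < p.parts.sup := by
  have := (mem_Ot2.mp hp).2.2
  nlinarith

lemma parts_eq_sup_cons_one_cons_of_mem_Ot2 (ht : 0 < t) {p : Nat.Partition n}
    (hp : p ∈ Ot2 t n) :
    p.parts = p.parts.sup ::ₘ 1 ::ₘ eraseSupOne p.parts := by
  have hsup := one_lt_sup_of_mem_Ot2 ht hp
  have hsup_mem : p.parts.sup ∈ p.parts := by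
    refine Multiset.sup_mem_of_ne_zero fun h0 => ?_
    simp [h0] at hsup
  have hone_mem : 1 ∈ p.parts.erase p.parts.sup := by
    obtain ⟨⟨-, hodd⟩, -⟩ := mem_Ot2.mp hp
    rw [← Multiset.count_pos, Multiset.count_erase_of_ne hsup.ne]
    exact hodd.pos
  rw [eraseSupOne, Multiset.cons_erase hone_mem, Multiset.cons_erase hsup_mem]

lemma two_mul_mul_add_one_notMem {s : Multiset ℕ}
    (hmod : ∀ x ∈ s, 1 < x → ¬ x ≡ 1 [MOD 2 * t]) {k : ℕ} (hk : 0 < k) (ht : 0 < t) :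
    2 * k * t + 1 ∉ s := fun hx =>
  have hkt : 2 * k * t = 2 * t * k := by ring
  have hpos : 0 < 2 * t * k := by positivity
  hmod _ hx (by omega) (by rw [hkt]; exact Nat.mul_add_mod _ _ 1)

lemma mem_Rt2_of_parts_eq_repack (ht : 2 ≤ t) {N : ℕ} {r : Multiset ℕ}
    (hreg : ∀ x ∈ r, ¬ t ∣ x) (hmod : ∀ x ∈ r, 1 < x → ¬ x ≡ 1 [MOD 2 * t])
    (heven : Even (r.count 1)) {q : Nat.Partition n} (hq : q.parts = repack (2 * t) N r) :
    q ∈ Rt2 t n := by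
  have hsucc_notMem : 2 * t + 1 ∉ r := by
    simpa using two_mul_mul_add_one_notMem hmod one_pos (by omega)
  have hsucc : 2 ≤ q.parts.count (2 * t + 1) := by
    simpa [hq, count_repack, Multiset.count_eq_zero.mpr hsucc_notMem]
      using two_le_numSucc (2 * t) N
  simp only [Rt2, Rt, mem_filter, mem_univ, true_and]
  refine ⟨⟨fun x hx hdvd => ?_, Multiset.count_pos.mp (by omega)⟩, ?_, by omega,
    fun k hk => ?_⟩
  · rw [hq] at hx
    rcases mem_repack hx with hx | rfl | rfl
    · exact absurd hdvd (hreg x hx)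
    · have := Nat.le_of_dvd one_pos ((Nat.dvd_add_right (dvd_mul_left t 2)).mp hdvd)
      omega
    · rfl
  · simpa [hq, count_repack, show t ≠ 0 by omega, show 1 ≠ 2 * t by omega] using heven
  · have h2 : 2 * k * t + 1 ≠ 2 * t := by rw [mul_assoc]; omega
    simpa [hq, count_repack, h2, show k ≠ 1 by omega, show t ≠ 0 by omega]
      using two_mul_mul_add_one_notMem hmod (k := k) (by omega) (by omega)

lemma exists_mem_Rt2_parts_eq_toRt2Parts (ht : 2 ≤ t) {p : Nat.Partition n}
    (hp : p ∈ Ot2 t n) : ∃ q ∈ Rt2 t n, q.parts = toRt2Parts t p.parts := by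
  obtain ⟨⟨hreg, hodd⟩, hmod, -⟩ := mem_Ot2.mp hp
  have hN := sq_le_sup_add_one_of_mem_Ot2 hp
  have hparts := parts_eq_sup_cons_one_cons_of_mem_Ot2 (by omega) hp
  have heven : Even ((eraseSupOne p.parts).count 1) := by
    rw [hparts, Multiset.count_cons_of_ne (one_lt_sup_of_mem_Ot2 (by omega) hp).ne,
      Multiset.count_cons_self] at hodd
    simpa [Nat.odd_add_one] using hodd
  let q : Nat.Partition n :=
    { parts := toRt2Parts t p.parts
      parts_pos := fun hx => by
        rcases mem_repack hx with hx | rfl | rfl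
        · exact p.parts_pos (mem_of_mem_eraseSupOne hx)
        all_goals omega
      parts_sum := by
        have hsum := p.parts_sum
        rw [hparts, Multiset.sum_cons, Multiset.sum_cons] at hsum
        rw [toRt2Parts, sum_repack (by omega) hN]
        omega }
  exact ⟨q, mem_Rt2_of_parts_eq_repack ht (fun x hx => hreg x (mem_of_mem_eraseSupOne hx))
    (fun x hx => hmod x (mem_of_mem_eraseSupOne hx)) heven rfl, rfl⟩

lemma toRt2Parts_injOn (ht : 0 < t) :
    Set.InjOn (fun p : Nat.Partition n => toRt2Parts t p.parts) (Ot2 t n) := by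
  have avoids {p : Nat.Partition n} (hp : p ∈ Ot2 t n) :
      2 * t ∉ eraseSupOne p.parts ∧ 2 * t + 1 ∉ eraseSupOne p.parts := by
    obtain ⟨⟨hreg, -⟩, hmod, -⟩ := mem_Ot2.mp hp
    refine ⟨fun hx => hreg _ (mem_of_mem_eraseSupOne hx) (dvd_mul_left t 2), fun hx => ?_⟩
    exact two_mul_mul_add_one_notMem hmod one_pos ht (by simpa using mem_of_mem_eraseSupOne hx)
  intro p hp p' hp' h
  obtain ⟨hsup, hrest⟩ := eq_and_eq_of_repack_eq (by omega) (sq_le_sup_add_one_of_mem_Ot2 hp)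
    (sq_le_sup_add_one_of_mem_Ot2 hp') (avoids hp) (avoids hp') h
  rw [Nat.Partition.ext_iff, parts_eq_sup_cons_one_cons_of_mem_Ot2 ht hp,
    parts_eq_sup_cons_one_cons_of_mem_Ot2 ht hp',
    Nat.succ_injective hsup, hrest]

end OtToRt

theorem card_Ot2_le_card_Rt2 (t n : ℕ) (ht : 2 ≤ t) :
    (Ot2 t n).card ≤ (Rt2 t n).card :=
  calc (Ot2 t n).card
      ≤ ((Rt2 t n).image Nat.Partition.parts).card := by
        refine card_le_card_of_injOn _ (fun p hp => ?_) (toRt2Parts_injOn (by omega))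
        obtain ⟨q, hq, hqp⟩ := exists_mem_Rt2_parts_eq_toRt2Parts ht hp
        exact mem_image.mpr ⟨q, hq, hqp⟩
    _ = (Rt2 t n).card := card_image_of_injective _ fun _ _ => Nat.Partition.ext
end

section
/- Let t ≥ 2 be an integer and n ≥ 0. The cardinality of O_t^4(n) is at most the cardinality of R_t^4(n); equivalently, there is an injection from O_t^4(n) into R_t^4(n). -/
open Finset
open scoped Classical

/-- `O_t^4(n)`: partitions in `O_t(n)` with no part `> 1` congruent to `1 (mod 2t)`,
largest part `< 8t² + 1`, every part `l ≥ 2` appearing fewer than `6t + 1` times, and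
the part 1 appearing at least `12t + 3` times. -/
noncomputable def Ot4 (t n : ℕ) : Finset (Nat.Partition n) :=
  (Ot t n).filter fun p =>
    (∀ x ∈ p.parts, 1 < x → ¬ x ≡ 1 [MOD 2 * t]) ∧ p.parts.sup < 8 * t ^ 2 + 1 ∧
      (∀ l ∈ p.parts, 2 ≤ l → p.parts.count l < 6 * t + 1) ∧
      12 * t + 3 ≤ p.parts.count 1

/-- `R_t^4(n)`: partitions in `R_t(n)` in which 1 appears an even number of times,
`f(8t+1) > 0`, and `f(2kt+1) = 0` for all `k ≥ 1` with `k ≠ 1, 4`. -/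
noncomputable def Rt4 (t n : ℕ) : Finset (Nat.Partition n) :=
  (Rt t n).filter fun p =>
    Even (p.parts.count 1) ∧ 0 < p.parts.count (8 * t + 1) ∧
      ∀ k, 1 ≤ k → k ≠ 1 → k ≠ 4 → p.parts.count (2 * k * t + 1) = 0

/-!
Every `λ ∈ O_t^4(n)` has at least `12t + 3` parts equal to `1`; trade exactly that many
ones for the three parts `2t + 1, 2t + 1, 8t + 1`, which have the same sum. The number of
ones drops by an odd amount and becomes even, the new parts are not multiples of `t`
because `t ≥ 2`, and since `λ` had no part `2kt + 1` with `k ≥ 1`, the only such parts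
afterwards are `2t + 1` and `8t + 1`. The trade is undone by trading back, so it is
injective.
-/

theorem Nat.add_one_modEq_one_of_dvd {m x : ℕ} (h : m ∣ x) : x + 1 ≡ 1 [MOD m] := by
  simpa using (Nat.modEq_zero_iff_dvd.2 h).add_right 1

theorem Nat.not_dvd_mul_add_one {t m : ℕ} (ht : 2 ≤ t) : ¬t ∣ m * t + 1 := fun h => by
  have := Nat.dvd_one.1 ((Nat.dvd_add_right (dvd_mul_left t m)).1 h)
  omega

namespace Nat.Partition

variable {n : ℕ}

/-- A partition whose parts do not contain `s` is left unchanged. -/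
def exchange (s a : Multiset ℕ) (ha : ∀ i ∈ a, 0 < i) (hsum : a.sum = s.sum)
    (p : n.Partition) : n.Partition :=
  if hs : s ≤ p.parts then
    { parts := p.parts - s + a
      parts_pos := fun {i} hi => (Multiset.mem_add.1 hi).elim
        (fun h => p.parts_pos (Multiset.mem_of_le (Multiset.sub_le_self _ _) h)) (ha i)
      parts_sum := by
        rw [Multiset.sum_add, hsum, ← Multiset.sum_add, tsub_add_cancel_of_le hs, p.parts_sum] }
  else p

section exchange

variable {s a : Multiset ℕ} {ha : ∀ i ∈ a, 0 < i} {hsum : a.sum = s.sum} {p : n.Partition}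

theorem exchange_parts (hs : s ≤ p.parts) :
    (exchange s a ha hsum p).parts = p.parts - s + a := by
  rw [exchange, dif_pos hs]

theorem mem_exchange_parts {x : ℕ} (hs : s ≤ p.parts) :
    x ∈ (exchange s a ha hsum p).parts ↔ x ∈ p.parts - s ∨ x ∈ a := by
  rw [exchange_parts hs, Multiset.mem_add]

theorem count_exchange_parts (x : ℕ) (hs : s ≤ p.parts) :
    (exchange s a ha hsum p).parts.count x = p.parts.count x - s.count x + a.count x := by
  rw [exchange_parts hs, Multiset.count_add, Multiset.count_sub]

theorem exchange_injOn :
    Set.InjOn (exchange s a ha hsum) {p : n.Partition | s ≤ p.parts} := by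
  intro p hp q hq hpq
  have hsub : p.parts - s = q.parts - s := by
    simpa only [exchange_parts hp, exchange_parts hq, add_left_inj] using
      congrArg Nat.Partition.parts hpq
  ext1
  rw [← tsub_add_cancel_of_le (show s ≤ p.parts from hp),
    ← tsub_add_cancel_of_le (show s ≤ q.parts from hq), hsub]

end exchange

end Nat.Partition

open Nat.Partition

def tradedParts (t : ℕ) : Multiset ℕ := {2 * t + 1, 2 * t + 1, 8 * t + 1}

theorem mem_tradedParts {t x : ℕ} : x ∈ tradedParts t ↔ x = 2 * t + 1 ∨ x = 8 * t + 1 := by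
  simp [tradedParts]

theorem pos_of_mem_tradedParts {t x : ℕ} (hx : x ∈ tradedParts t) : 0 < x := by
  rcases mem_tradedParts.1 hx with rfl | rfl <;> omega

theorem sum_tradedParts (t : ℕ) :
    (tradedParts t).sum = (Multiset.replicate (12 * t + 3) 1).sum := by
  simp only [tradedParts, Multiset.insert_eq_cons, Multiset.sum_cons, Multiset.sum_singleton,
    Multiset.sum_replicate, smul_eq_mul, mul_one]
  ring

noncomputable def tradeOnes {n : ℕ} (t : ℕ) : n.Partition → n.Partition :=
  exchange (Multiset.replicate (12 * t + 3) 1) (tradedParts t)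
    (fun _ => pos_of_mem_tradedParts) (sum_tradedParts t)

theorem count_tradedParts_two_mul_mul_add_one {t k : ℕ} (ht : 0 < t) (hk1 : k ≠ 1)
    (hk4 : k ≠ 4) : (tradedParts t).count (2 * k * t + 1) = 0 := by
  refine Multiset.count_eq_zero.2 fun hx => ?_
  rcases mem_tradedParts.1 hx with h | h
  · exact hk1 (Nat.eq_of_mul_eq_mul_right (show 0 < 2 * t by omega) (by linarith))
  · exact hk4 (Nat.eq_of_mul_eq_mul_right (show 0 < 2 * t by omega) (by linarith))

theorem replicate_le_parts_of_mem_Ot4 {t n : ℕ} {p : n.Partition} (hp : p ∈ Ot4 t n) :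
    Multiset.replicate (12 * t + 3) 1 ≤ p.parts :=
  Multiset.le_count_iff_replicate_le.1 (Finset.mem_filter.1 hp).2.2.2.2

theorem tradeOnes_mem_Rt4 {t n : ℕ} (ht : 2 ≤ t) {p : n.Partition} (hp : p ∈ Ot4 t n) :
    tradeOnes t p ∈ Rt4 t n := by
  have hs := replicate_le_parts_of_mem_Ot4 hp
  simp only [Ot4, Ot, Finset.mem_filter, Finset.mem_univ, true_and] at hp
  obtain ⟨⟨hreg, hodd⟩, hmod, -, -, -⟩ := hp
  have hmem {x : ℕ} : x ∈ (tradeOnes t p).parts ↔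
      x ∈ p.parts - Multiset.replicate (12 * t + 3) 1 ∨ x ∈ tradedParts t :=
    mem_exchange_parts hs
  have hcount (x : ℕ) : (tradeOnes t p).parts.count x =
      p.parts.count x - (Multiset.replicate (12 * t + 3) 1).count x +
        (tradedParts t).count x :=
    count_exchange_parts x hs
  simp only [Rt4, Rt, Finset.mem_filter, Finset.mem_univ, true_and]
  refine ⟨⟨fun x hx hdvd => ?_, hmem.2 (Or.inr (mem_tradedParts.2 (Or.inl rfl)))⟩, ?_, ?_,
    fun k hk hk1 hk4 => ?_⟩
  · rcases hmem.1 hx with hx | hx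
    · exact absurd hdvd (hreg x (Multiset.mem_of_le (Multiset.sub_le_self _ _) hx))
    · rcases mem_tradedParts.1 hx with rfl | rfl <;>
        exact absurd hdvd (Nat.not_dvd_mul_add_one ht)
  · have h1 : (tradedParts t).count 1 = 0 :=
      Multiset.count_eq_zero.2 (by rw [mem_tradedParts]; omega)
    rw [hcount, Multiset.count_replicate_self, h1, add_zero]
    exact Nat.Odd.sub_odd hodd ⟨6 * t + 1, by ring⟩
  · rw [hcount]
    exact Nat.add_pos_right _ (Multiset.count_pos.2 (mem_tradedParts.2 (Or.inr rfl)))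
  · have hp : p.parts.count (2 * k * t + 1) = 0 := Multiset.count_eq_zero.2 fun hx =>
      hmod _ hx (by nlinarith) (Nat.add_one_modEq_one_of_dvd ⟨k, by ring⟩)
    rw [hcount, hp, count_tradedParts_two_mul_mul_add_one (by omega) hk1 hk4, Nat.zero_sub]

theorem card_Ot4_le_card_Rt4 (t n : ℕ) (ht : 2 ≤ t) :
    (Ot4 t n).card ≤ (Rt4 t n).card :=
  Finset.card_le_card_of_injOn (tradeOnes t) (fun _ hp => tradeOnes_mem_Rt4 ht hp)
    (exchange_injOn.mono fun _ => replicate_le_parts_of_mem_Ot4)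
end

section
/- Let t ≥ 4 be an integer and n ≥ 0. The cardinality of A_t(n) is at most the cardinality of S_t(n); equivalently, there is an injection from A_t(n) into S_t(n). -/
open Finset
open scoped Classical

/-- `A_t(n)`: the `t`-regular partitions of `n` with no part equal to 3 and in which the
part 1 appears a number of times congruent to `-2 (mod 2t)`. -/
noncomputable def At (t n : ℕ) : Finset (Nat.Partition n) :=
  Finset.univ.filter fun p => (∀ x ∈ p.parts, ¬ t ∣ x) ∧ p.parts.count 3 = 0 ∧
    (p.parts.count 1 : ℤ) ≡ -2 [ZMOD (2 * t : ℕ)]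

/-- `S_t(n)`: the `t`-regular partitions of `n` in which the part 1 appears a number of
times congruent to 2 or 4 modulo 6. -/
noncomputable def St (t n : ℕ) : Finset (Nat.Partition n) :=
  Finset.univ.filter fun p => (∀ x ∈ p.parts, ¬ t ∣ x) ∧
    (p.parts.count 1 % 6 = 2 ∨ p.parts.count 1 % 6 = 4)

/-!
Only the parts equal to 1 are touched. A partition in `A_t(n)` has `a ≥ 2t - 2 ≥ 6` ones, `a`
even, and no 3s. According to `a mod 3` we trade two of the ones for a 2 (leaving `a - 2 ≡ 4`
ones mod 6), or keep 2 resp. 4 ones and group the remaining ones into 3s. Since `t ≥ 4`, the new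
parts 2 and 3 keep the partition `t`-regular, and since there were no 3s before, the numbers of
1s and 3s of the image determine `a`, hence the original partition.
-/

def regroupOnes (a : ℕ) : Multiset ℕ :=
  if a % 3 = 0 then Multiset.replicate (a - 2) 1 + {2}
  else if a % 3 = 2 then Multiset.replicate 2 1 + Multiset.replicate ((a - 2) / 3) 3
  else Multiset.replicate 4 1 + Multiset.replicate ((a - 4) / 3) 3

lemma mem_regroupOnes {a x : ℕ} (hx : x ∈ regroupOnes a) : x = 1 ∨ x = 2 ∨ x = 3 := by
  unfold regroupOnes at hx
  split_ifs at hx <;>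
    simp only [Multiset.mem_add, Multiset.mem_replicate, Multiset.mem_singleton] at hx <;> omega

lemma sum_regroupOnes {a : ℕ} (ha : 2 ≤ a) : (regroupOnes a).sum = a := by
  unfold regroupOnes
  split_ifs <;>
    simp only [Multiset.sum_add, Multiset.sum_replicate, Multiset.sum_singleton, smul_eq_mul] <;>
    omega

lemma count_one_regroupOnes (a : ℕ) : (regroupOnes a).count 1 =
    if a % 3 = 0 then a - 2 else if a % 3 = 2 then 2 else 4 := by
  unfold regroupOnes
  split_ifs <;> simp [Multiset.count_replicate]

lemma count_three_regroupOnes (a : ℕ) : (regroupOnes a).count 3 =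
    if a % 3 = 0 then 0 else if a % 3 = 2 then (a - 2) / 3 else (a - 4) / 3 := by
  unfold regroupOnes
  split_ifs <;> simp [Multiset.count_replicate]

lemma count_one_regroupOnes_mod_six {a : ℕ} (ha : 2 ≤ a) (heven : Even a) :
    (regroupOnes a).count 1 % 6 = 2 ∨ (regroupOnes a).count 1 % 6 = 4 := by
  rw [count_one_regroupOnes]
  obtain ⟨k, rfl⟩ := heven
  split_ifs <;> omega

lemma eq_of_count_regroupOnes_eq {a b : ℕ} (ha : 5 ≤ a) (hb : 5 ≤ b)
    (h1 : (regroupOnes a).count 1 = (regroupOnes b).count 1)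
    (h3 : (regroupOnes a).count 3 = (regroupOnes b).count 3) : a = b := by
  rw [count_one_regroupOnes, count_one_regroupOnes] at h1
  rw [count_three_regroupOnes, count_three_regroupOnes] at h3
  split_ifs at h1 h3 <;> omega

def regroup (s : Multiset ℕ) : Multiset ℕ :=
  s.filter (· ≠ 1) + regroupOnes (s.count 1)

lemma filter_ne_one_add_replicate (s : Multiset ℕ) :
    s.filter (· ≠ 1) + Multiset.replicate (s.count 1) 1 = s := by
  rw [← Multiset.filter_eq', add_comm]
  exact Multiset.filter_add_not _ s

lemma sum_regroup {s : Multiset ℕ} (hs : 2 ≤ s.count 1) : (regroup s).sum = s.sum := by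
  conv_rhs => rw [← filter_ne_one_add_replicate s]
  simp [regroup, sum_regroupOnes hs, Multiset.sum_replicate]

lemma mem_regroup {s : Multiset ℕ} {x : ℕ} (hx : x ∈ regroup s) :
    x ∈ s ∨ x = 1 ∨ x = 2 ∨ x = 3 := by
  rcases Multiset.mem_add.mp hx with hx | hx
  · exact .inl (Multiset.mem_of_mem_filter hx)
  · exact .inr (mem_regroupOnes hx)

lemma count_one_regroup (s : Multiset ℕ) :
    (regroup s).count 1 = (regroupOnes (s.count 1)).count 1 := by
  simp [regroup]

lemma count_three_regroup {s : Multiset ℕ} (hs : s.count 3 = 0) :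
    (regroup s).count 3 = (regroupOnes (s.count 1)).count 3 := by
  simp [regroup, hs]

lemma regroup_injOn : Set.InjOn regroup {s | s.count 3 = 0 ∧ 5 ≤ s.count 1} := by
  rintro s ⟨hs3, hs1⟩ s' ⟨hs3', hs1'⟩ h
  have hones : s.count 1 = s'.count 1 := by
    refine eq_of_count_regroupOnes_eq hs1 hs1' ?_ ?_
    · rw [← count_one_regroup, ← count_one_regroup, h]
    · rw [← count_three_regroup hs3, ← count_three_regroup hs3', h]
  have hrest : s.filter (· ≠ 1) = s'.filter (· ≠ 1) := by
    unfold regroup at h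
    rw [hones] at h
    exact add_right_cancel h
  rw [← filter_ne_one_add_replicate s, ← filter_ne_one_add_replicate s', hrest, hones]

lemma le_add_two_and_even_of_modEq_neg_two {t a : ℕ}
    (h : (a : ℤ) ≡ -2 [ZMOD (2 * t : ℕ)]) : 2 * t ≤ a + 2 ∧ Even a := by
  have hdvd : ((2 * t : ℕ) : ℤ) ∣ a + 2 := by
    simpa using (Int.ModEq.add_right 2 h).symm.dvd
  have hle : ((2 * t : ℕ) : ℤ) ≤ a + 2 := Int.le_of_dvd (by positivity) hdvd
  have htwo : (2 : ℤ) ∣ a + 2 := dvd_trans ⟨t, by push_cast; ring⟩ hdvd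
  exact ⟨by exact_mod_cast hle, Nat.even_iff.mpr (by omega)⟩

lemma regroup_parts_mem_image_St {t n : ℕ} (ht : 4 ≤ t) {p : Nat.Partition n}
    (hp : p ∈ At t n) : regroup p.parts ∈ (St t n).image Nat.Partition.parts := by
  obtain ⟨-, hreg, -, hones⟩ := Finset.mem_filter.mp hp
  obtain ⟨hge, heven⟩ := le_add_two_and_even_of_modEq_neg_two hones
  have hsum : (regroup p.parts).sum = n := by
    rw [sum_regroup (by omega), p.parts_sum]
  have hpos : ∀ {x}, x ∈ regroup p.parts → 0 < x := fun hx => by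
    rcases mem_regroup hx with hx | hx
    · exact p.parts_pos hx
    · omega
  refine Finset.mem_image.mpr ⟨⟨regroup p.parts, hpos, hsum⟩, ?_, rfl⟩
  refine Finset.mem_filter.mpr ⟨Finset.mem_univ _, fun x hx hdvd => ?_, ?_⟩
  · rcases mem_regroup hx with hx | hx
    · exact hreg x hx hdvd
    · have := Nat.le_of_dvd (by omega) hdvd
      omega
  · rw [count_one_regroup]
    exact count_one_regroupOnes_mod_six (by omega) heven

lemma regroup_parts_injOn_At {t n : ℕ} (ht : 4 ≤ t) :
    Set.InjOn (fun p : Nat.Partition n => regroup p.parts) (At t n) := by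
  have hdomain {p : Nat.Partition n} (hp : p ∈ At t n) :
      p.parts.count 3 = 0 ∧ 5 ≤ p.parts.count 1 := by
    obtain ⟨-, -, hthree, hones⟩ := Finset.mem_filter.mp hp
    have := (le_add_two_and_even_of_modEq_neg_two hones).1
    exact ⟨hthree, by omega⟩
  exact fun p hp q hq h => Nat.Partition.ext (regroup_injOn (hdomain hp) (hdomain hq) h)

theorem card_At_le_card_St (t n : ℕ) (ht : 4 ≤ t) :
    (At t n).card ≤ (St t n).card :=
  calc (At t n).card ≤ ((St t n).image Nat.Partition.parts).card :=
        Finset.card_le_card_of_injOn _ (fun _ hp => regroup_parts_mem_image_St ht hp)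
          (regroup_parts_injOn_At ht)
    _ = (St t n).card := Finset.card_image_of_injective _ fun _ _ => Nat.Partition.ext
end

section
/- Let t ≥ 4 be an integer and n ≥ 0. The cardinality of A_t^3(n) is at most the cardinality of S_t^3(n); equivalently, there is an injection from A_t^3(n) into S_t^3(n). -/
open Finset
open scoped Classical

/-- `A_t^3(n)`: partitions in `A_t(n)` in which `f(1) ≡ 0 (mod 6)`. -/
noncomputable def At3 (t n : ℕ) : Finset (Nat.Partition n) :=
  (At t n).filter fun p => p.parts.count 1 % 6 = 0

/-- `S_t^3(n)`: partitions in `S_t(n)` in which `f(1) ≡ 4 (mod 6)` and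
`f(1) ≡ -4 (mod 2t)`. -/
noncomputable def St3 (t n : ℕ) : Finset (Nat.Partition n) :=
  (St t n).filter fun p => p.parts.count 1 % 6 = 4 ∧
    (p.parts.count 1 : ℤ) ≡ -4 [ZMOD (2 * t : ℕ)]

/-!
Merging two parts equal to 1 into one part equal to 2 lowers `f(1)` by 2, which turns
`f(1) ≡ 0 (mod 6)`, `f(1) ≡ -2 (mod 2t)` into `f(1) ≡ 4 (mod 6)`, `f(1) ≡ -4 (mod 2t)`, and keeps
the partition `t`-regular because `t ∤ 2`. The congruence `f(1) ≡ -2 (mod 2t)` forces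
`f(1) ≥ 2t - 2 ≥ 2`, so there are always two 1's to merge, and merging is injective because the
two 1's can be put back.
-/

namespace Nat.Partition

variable {n : ℕ}

/-- The identity on partitions with fewer than two parts equal to 1. -/
noncomputable def mergeTwoOnes (p : n.Partition) : n.Partition :=
  if h : 2 ≤ p.parts.count 1 then
    { parts := 2 ::ₘ (p.parts - Multiset.replicate 2 1)
      parts_pos := by
        rintro i hi
        rcases Multiset.mem_cons.mp hi with rfl | hi
        · exact two_pos
        · exact p.parts_pos (Multiset.mem_of_le (Multiset.sub_le_self _ _) hi)
      parts_sum := by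
        have hsum := congrArg Multiset.sum
          (tsub_add_cancel_of_le (Multiset.le_count_iff_replicate_le.mp h))
        rw [Multiset.sum_add, Multiset.sum_replicate, smul_eq_mul, p.parts_sum] at hsum
        rw [Multiset.sum_cons]
        omega }
  else p

lemma parts_mergeTwoOnes {p : n.Partition} (h : 2 ≤ p.parts.count 1) :
    p.mergeTwoOnes.parts = 2 ::ₘ (p.parts - Multiset.replicate 2 1) := by
  rw [mergeTwoOnes, dif_pos h]

lemma count_one_mergeTwoOnes {p : n.Partition} (h : 2 ≤ p.parts.count 1) :
    p.mergeTwoOnes.parts.count 1 = p.parts.count 1 - 2 := by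
  rw [parts_mergeTwoOnes h, Multiset.count_cons_of_ne (by norm_num), Multiset.count_sub,
    Multiset.count_replicate_self]

lemma mem_mergeTwoOnes {p : n.Partition} (h : 2 ≤ p.parts.count 1) {x : ℕ}
    (hx : x ∈ p.mergeTwoOnes.parts) : x = 2 ∨ x ∈ p.parts := by
  rw [parts_mergeTwoOnes h, Multiset.mem_cons] at hx
  exact hx.imp_right (Multiset.mem_of_le (Multiset.sub_le_self _ _))

lemma injOn_mergeTwoOnes : Set.InjOn (mergeTwoOnes (n := n)) {p | 2 ≤ p.parts.count 1} := by
  intro p hp q hq hpq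
  have hp' := Multiset.le_count_iff_replicate_le.mp hp
  have hq' := Multiset.le_count_iff_replicate_le.mp hq
  have hsub : p.parts - Multiset.replicate 2 1 = q.parts - Multiset.replicate 2 1 := by
    simpa [parts_mergeTwoOnes hp, parts_mergeTwoOnes hq] using congrArg parts hpq
  ext1
  rw [← tsub_add_cancel_of_le hp', hsub, tsub_add_cancel_of_le hq']

end Nat.Partition

lemma Int.le_add_of_modEq_neg {c k m : ℕ} (hk : 0 < k) (h : (c : ℤ) ≡ -k [ZMOD m]) :
    m ≤ c + k := by
  have hdvd : (m : ℤ) ∣ c + k := by simpa using h.symm.dvd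
  exact_mod_cast Int.le_of_dvd (by omega) hdvd

open Nat.Partition

lemma two_le_count_one_of_mem_At3 {t n : ℕ} (ht : 2 ≤ t) {p : n.Partition}
    (hp : p ∈ At3 t n) : 2 ≤ p.parts.count 1 := by
  simp only [At3, At, mem_filter, mem_univ, true_and] at hp
  have := Int.le_add_of_modEq_neg (k := 2) two_pos hp.1.2.2
  omega

lemma mergeTwoOnes_mem_St3 {t n : ℕ} (ht : 4 ≤ t) {p : n.Partition} (hp : p ∈ At3 t n) :
    p.mergeTwoOnes ∈ St3 t n := by
  have h2 := two_le_count_one_of_mem_At3 (by omega) hp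
  simp only [At3, At, St3, St, mem_filter, mem_univ, true_and] at hp ⊢
  obtain ⟨⟨hreg, -, hmod⟩, h6⟩ := hp
  have hreg' : ∀ x ∈ p.mergeTwoOnes.parts, ¬ t ∣ x := by
    intro x hx
    rcases mem_mergeTwoOnes h2 hx with rfl | hx
    · exact fun hdvd => absurd (Nat.le_of_dvd two_pos hdvd) (by omega)
    · exact hreg x hx
  have hmod' : ((p.parts.count 1 - 2 : ℕ) : ℤ) ≡ -4 [ZMOD (2 * t : ℕ)] := by
    rw [Nat.cast_sub h2]
    simpa using hmod.sub_right 2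
  rw [count_one_mergeTwoOnes h2]
  exact ⟨⟨hreg', by omega⟩, by omega, hmod'⟩

theorem card_At3_le_card_St3 (t n : ℕ) (ht : 4 ≤ t) :
    (At3 t n).card ≤ (St3 t n).card :=
  card_le_card_of_injOn mergeTwoOnes (fun _ hp => mergeTwoOnes_mem_St3 ht hp)
    (injOn_mergeTwoOnes.mono fun _ hp => two_le_count_one_of_mem_At3 (by omega) hp)
end

section
/- For every integer n ≥ 7, the number of partitions of n into odd parts in which the part 1 appears a number of times congruent to 6 modulo 12 is at most the number of partitions of n into odd parts in which the part 1 appears a number of times congruent to 4 modulo 12. -/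
open Finset
open scoped Classical

/-!
If a partition into odd parts has a part other than 1, replace its largest part `m` and two of
its ones by the single part `m + 2`: the number of ones drops by two, and `m + 2` is then the
largest part and occurs exactly once, which recovers the original partition. Otherwise the
partition is `1^n` with `n ≡ 6 (mod 12)`, so `n ≥ 18`, and it is sent to `1^(n-14) 7 7`, whose
largest part is repeated.
-/

namespace Multiset

theorem sup_mem_of_ne_zero_s17 {α : Type*} [LinearOrder α] [OrderBot α] {s : Multiset α}
    (hs : s ≠ 0) : s.sup ∈ s := by
  induction s using Multiset.induction_on with
  | empty => contradiction
  | cons a s ih =>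
    rw [sup_cons]
    rcases eq_or_ne s 0 with rfl | hs'
    · simp
    · rcases max_choice a s.sup with h | h <;> rw [h]
      · exact mem_cons_self _ _
      · exact mem_cons_of_mem (ih hs')

def raiseMax (s : Multiset ℕ) : Multiset ℕ := (s.sup + 2) ::ₘ (s - {1, 1, s.sup})

def lowerMax (t : Multiset ℕ) : Multiset ℕ := t.erase t.sup + {1, 1, t.sup - 2}

variable {s : Multiset ℕ}

theorem mem_raiseMax {x : ℕ} (hx : x ∈ s.raiseMax) : x = s.sup + 2 ∨ x ∈ s :=
  (mem_cons.mp hx).imp_right (mem_of_le (Multiset.sub_le_self _ _))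

theorem sum_raiseMax (h : {1, 1, s.sup} ≤ s) : s.raiseMax.sum = s.sum := by
  conv_rhs => rw [← tsub_add_cancel_of_le h]
  simp only [raiseMax, sum_cons, sum_add, insert_eq_cons, sum_singleton]
  ring

theorem count_one_raiseMax (h : s.sup ≠ 1) : s.raiseMax.count 1 = s.count 1 - 2 := by
  simp [raiseMax, Ne.symm h]
  omega

theorem sup_raiseMax : s.raiseMax.sup = s.sup + 2 := by
  rw [raiseMax, sup_cons]
  refine sup_of_le_left (le_trans (sup_mono (subset_of_le (Multiset.sub_le_self s _))) ?_)
  omega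

theorem count_sup_raiseMax : s.raiseMax.count s.raiseMax.sup = 1 := by
  have hs : s.sup + 2 ∉ s := fun hmem => by have := le_sup hmem; omega
  rw [sup_raiseMax, raiseMax, count_cons_self, count_eq_zero_of_notMem
    (fun hmem => hs (mem_of_le (Multiset.sub_le_self _ _) hmem))]

theorem lowerMax_raiseMax (h : {1, 1, s.sup} ≤ s) : s.raiseMax.lowerMax = s := by
  rw [lowerMax, sup_raiseMax, raiseMax, erase_cons_head, Nat.add_sub_cancel,
    tsub_add_cancel_of_le h]

theorem one_one_sup_le (h1 : 2 ≤ s.count 1) (hs : s.sup ≠ 1) :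
    {1, 1, s.sup} ≤ s := by
  have hsup : s.sup ∈ s := sup_mem_of_ne_zero_s17 (by rintro rfl; simp at h1)
  have hsup_count := count_pos.mpr hsup
  rw [le_iff_count]
  intro a
  by_cases ha : a = 1
  · simp [ha, Ne.symm hs, h1]
  · by_cases ha' : a = s.sup
    · simp [ha', hs]
      omega
    · simp [ha, ha']

theorem count_sup_replicate_one_add_seven_seven (m : ℕ) :
    (replicate m 1 + {7, 7}).count (replicate m 1 + {7, 7}).sup = 2 := by
  have hsup : (replicate m 1 + {7, 7}).sup = 7 := by
    refine le_antisymm (sup_le.mpr fun x hx => ?_) (le_sup (by simp))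
    simp only [insert_eq_cons, mem_add, mem_replicate, mem_cons, mem_singleton] at hx
    omega
  rw [hsup]
  simp [mem_replicate]

end Multiset

namespace Nat.Partition

variable {n : ℕ}

def raiseMax (p : n.Partition) (h : {1, 1, p.parts.sup} ≤ p.parts) : n.Partition where
  parts := p.parts.raiseMax
  parts_pos hi := (Multiset.mem_raiseMax hi).elim (fun h => h ▸ Nat.succ_pos _) p.parts_pos
  parts_sum := (Multiset.sum_raiseMax h).trans p.parts_sum

def onesAndTwoSevens (h : 14 ≤ n) : n.Partition where
  parts := Multiset.replicate (n - 14) 1 + {7, 7}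
  parts_pos hi := by
    simp only [Multiset.insert_eq_cons, Multiset.mem_add, Multiset.mem_replicate,
      Multiset.mem_cons, Multiset.mem_singleton] at hi
    omega
  parts_sum := by simp; omega

-- The final branch is only a default: it is never reached from odd partitions with
-- `6 (mod 12)` ones when `7 ≤ n`.
noncomputable def lowerOnes (p : n.Partition) : n.Partition :=
  if h : {1, 1, p.parts.sup} ≤ p.parts ∧ p.parts.sup ≠ 1 then p.raiseMax h.1
  else if h14 : 14 ≤ n then onesAndTwoSevens h14 else p

variable {p : n.Partition}

theorem parts_eq_replicate_of_sup_eq_one (hs : p.parts.sup = 1) :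
    p.parts = Multiset.replicate n 1 := by
  have hone : ∀ x ∈ p.parts, x = 1 := fun x hx =>
    le_antisymm (hs ▸ Multiset.le_sup hx) (p.parts_pos hx)
  refine Multiset.eq_replicate.mpr ⟨?_, hone⟩
  have := p.parts_sum
  rwa [Multiset.eq_replicate_card.mpr hone, Multiset.sum_replicate, smul_eq_mul, mul_one] at this

theorem lowerOnes_parts_of_sup_ne_one (h2 : 2 ≤ p.parts.count 1) (hs : p.parts.sup ≠ 1) :
    (lowerOnes p).parts = p.parts.raiseMax := by
  rw [lowerOnes, dif_pos ⟨Multiset.one_one_sup_le h2 hs, hs⟩]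
  rfl

theorem lowerOnes_parts_of_sup_eq_one (hs : p.parts.sup = 1) (hn : 14 ≤ n) :
    (lowerOnes p).parts = Multiset.replicate (n - 14) 1 + {7, 7} := by
  rw [lowerOnes, dif_neg (fun h => h.2 hs), dif_pos hn]
  rfl

theorem eighteen_le_of_sup_eq_one (hc : p.parts.count 1 % 12 = 6) (hn : 7 ≤ n)
    (hs : p.parts.sup = 1) : 18 ≤ n := by
  rw [parts_eq_replicate_of_sup_eq_one hs, Multiset.count_replicate_self] at hc
  omega

theorem lowerOnes_mapsTo (hn : 7 ≤ n) :
    Set.MapsTo lowerOnes {p : n.Partition | (∀ x ∈ p.parts, Odd x) ∧ p.parts.count 1 % 12 = 6}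
      {p | (∀ x ∈ p.parts, Odd x) ∧ p.parts.count 1 % 12 = 4} := by
  rintro p ⟨hodd, hc⟩
  simp only [Set.mem_ofPred_eq]
  have h6 : 6 ≤ p.parts.count 1 := by omega
  by_cases hs : p.parts.sup = 1
  · have h18 := eighteen_le_of_sup_eq_one hc hn hs
    rw [parts_eq_replicate_of_sup_eq_one hs, Multiset.count_replicate_self] at hc
    rw [lowerOnes_parts_of_sup_eq_one hs (by omega)]
    refine ⟨fun x hx => ?_, ?_⟩
    · simp only [Multiset.insert_eq_cons, Multiset.mem_add, Multiset.mem_replicate,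
        Multiset.mem_cons, Multiset.mem_singleton] at hx
      rcases hx with ⟨-, rfl⟩ | rfl | rfl <;> decide
    · simp
      omega
  · rw [lowerOnes_parts_of_sup_ne_one (by omega) hs, Multiset.count_one_raiseMax hs]
    refine ⟨fun x hx => ?_, by omega⟩
    rcases Multiset.mem_raiseMax hx with rfl | hx
    · exact (hodd _ (Multiset.sup_mem_of_ne_zero_s17 fun h0 => by simp [h0] at h6)).add_even even_two
    · exact hodd x hx

theorem lowerOnes_injOn (hn : 7 ≤ n) :
    Set.InjOn lowerOnes {p : n.Partition | p.parts.count 1 % 12 = 6} := by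
  suffices ∀ p : n.Partition, p.parts.count 1 % 12 = 6 → p.parts =
      if (lowerOnes p).parts.count (lowerOnes p).parts.sup = 1 then (lowerOnes p).parts.lowerMax
      else Multiset.replicate n 1 by
    intro p hp q hq hpq
    exact Nat.Partition.ext ((this p hp).trans (hpq ▸ (this q hq).symm))
  intro p hc
  by_cases hs : p.parts.sup = 1
  · have h18 := eighteen_le_of_sup_eq_one hc hn hs
    rw [lowerOnes_parts_of_sup_eq_one hs (by omega),
      Multiset.count_sup_replicate_one_add_seven_seven, if_neg (by decide),
      parts_eq_replicate_of_sup_eq_one hs]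
  · have h2 : 2 ≤ p.parts.count 1 := by omega
    rw [lowerOnes_parts_of_sup_ne_one h2 hs, if_pos Multiset.count_sup_raiseMax,
      Multiset.lowerMax_raiseMax (Multiset.one_one_sup_le h2 hs)]

end Nat.Partition

theorem odd_partitions_count_one_mod12 (n : ℕ) (hn : 7 ≤ n) :
    (Finset.univ.filter fun p : Nat.Partition n =>
        (∀ x ∈ p.parts, Odd x) ∧ p.parts.count 1 % 12 = 6).card ≤
      (Finset.univ.filter fun p : Nat.Partition n =>
        (∀ x ∈ p.parts, Odd x) ∧ p.parts.count 1 % 12 = 4).card := by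
  refine card_le_card_of_injOn Nat.Partition.lowerOnes ?_ ?_ <;>
    simp only [coe_filter, mem_univ, true_and]
  · exact Nat.Partition.lowerOnes_mapsTo hn
  · exact (Nat.Partition.lowerOnes_injOn hn).mono fun p hp => hp.2
end

section
/- Let t ≥ 2 and n ≥ 0 be integers with (t,n) ∉ {(2,5), (2,8), (2,11), (2,14)}. Then the coefficient of q^n in the formal power series F = ((q^t;q^t)_∞/(q;q)_∞) · q^{3t−3}(1+q^3)(1−q)(1−q^2)/(1−q^{3t}) is nonnegative. -/
open Finset PowerSeries

/-!
Splitting `(q;q)_∞` by residues modulo `t` gives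
`F = q^{3t-3}(1+q^3)(1-q)(1-q^2)/(1-q^{3t}) · ∏_{1 ≤ r < t} (q^r;q^t)_∞⁻¹`.
For `t ≥ 3` the factors `1-q` and `1-q^2` cancel against `(q;q^t)_∞` and `(q^2;q^t)_∞`, and
what is left is a product of series `1/(1-q^k)` and monomials, all with nonnegative coefficients.

For `t = 2`, `F = q^3/(1-q^3) · (1-q^2)/(q^3;q^2)_∞`. With `E_j = 1/(q^3;q^2)_j`, the relation
`E_{j+1}(1-q^{2j+3}) = E_j` telescopes to
`(1 - q^2 + q^{2j+3}) E_j = 1 - q^2 + q^3 + ∑_{i<j} q^{4i+6} E_{i+1}`,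
so for `j ≥ 3`, modulo `q^{2j+3}`, `F = q^3/(1-q^3) · (1 + V) - (q^5 + q^8 + q^11 + q^14)` with `V`
nonnegative: the term `q^14 E_3` pays for every `-q^{3m+2}` with `m ≥ 5`.

Infinite products are compared with their partial products modulo `X^(n+1)`.
-/

notation "𝔪[" n "]" => Ideal.span {(X : PowerSeries _) ^ (n + 1)}

section NonnegCoeffs

variable (R : Type*) [CommSemiring R] [PartialOrder R] [IsOrderedRing R]

def nonnegCoeffs : Subsemiring R⟦X⟧ where
  carrier := {f | ∀ n, 0 ≤ coeff n f}
  mul_mem' {f g} hf hg n := by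
    rw [coeff_mul]
    exact sum_nonneg fun p _ => mul_nonneg (hf p.1) (hg p.2)
  one_mem' n := by
    rw [coeff_one]
    split_ifs <;> simp
  add_mem' {f g} hf hg n := by
    rw [map_add]
    exact add_nonneg (hf n) (hg n)
  zero_mem' n := by simp

variable {R}

theorem X_mem_nonnegCoeffs : (X : R⟦X⟧) ∈ nonnegCoeffs R := fun n => by
  rw [coeff_X]
  split_ifs <;> simp

end NonnegCoeffs

theorem sub_C_constantCoeff_mem_nonnegCoeffs {R : Type*} [CommRing R] [PartialOrder R]
    [IsOrderedRing R] {f : R⟦X⟧} (hf : f ∈ nonnegCoeffs R) :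
    f - C (constantCoeff f) ∈ nonnegCoeffs R := fun n => by
  rcases n with _ | n
  · simp
  · simpa [coeff_C] using hf (n + 1)

theorem constantCoeff_prod_one_sub_X_pow {R ι : Type*} [CommRing R] (s : Finset ι) {e : ι → ℕ}
    (he : ∀ i ∈ s, e i ≠ 0) : constantCoeff (∏ i ∈ s, (1 - X ^ e i : R⟦X⟧)) = 1 := by
  rw [map_prod]
  exact prod_eq_one fun i hi => by simp [he i hi]

section Field

variable {k : Type*} [Field k]

theorem inv_prod {ι : Type*} (s : Finset ι) (f : ι → k⟦X⟧) :
    (∏ i ∈ s, f i)⁻¹ = ∏ i ∈ s, (f i)⁻¹ := by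
  classical
  induction s using Finset.induction_on with
  | empty => simp
  | insert a s ha ih => rw [prod_insert ha, prod_insert ha, PowerSeries.mul_inv_rev, ih, mul_comm]

theorem inv_one_sub_X_pow_eq_expand {e : ℕ} (he : e ≠ 0) :
    (1 - X ^ e : k⟦X⟧)⁻¹ = expand e he (mk 1) := by
  have h : (1 - X ^ e : k⟦X⟧) = expand e he (1 - X) := by simp
  rw [inv_eq_iff_mul_eq_one (by simp [he]), h, ← map_mul, mk_one_mul_one_sub_eq_one, map_one]

theorem inv_one_sub_X_pow_mem_nonnegCoeffs [LinearOrder k] [IsStrictOrderedRing k] {e : ℕ}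
    (he : e ≠ 0) : (1 - X ^ e : k⟦X⟧)⁻¹ ∈ nonnegCoeffs k := fun n => by
  rw [inv_one_sub_X_pow_eq_expand he, coeff_expand]
  split_ifs <;> simp

theorem inv_smodEq_inv {I : Ideal k⟦X⟧} {f g : k⟦X⟧} (h : f ≡ g [SMOD I])
    (hf : constantCoeff f ≠ 0) (hg : constantCoeff g ≠ 0) : f⁻¹ ≡ g⁻¹ [SMOD I] :=
  calc f⁻¹ = f⁻¹ * (g * g⁻¹) := by rw [PowerSeries.mul_inv_cancel g hg, mul_one]
    _ ≡ f⁻¹ * (f * g⁻¹) [SMOD I] := (SModEq.refl _).mul (h.symm.mul (SModEq.refl _))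
    _ = g⁻¹ := by rw [← mul_assoc, PowerSeries.inv_mul_cancel f hf, one_mul]

end Field

section Truncation

variable {R : Type*} [CommRing R] {n : ℕ}

theorem coeff_eq_of_smodEq {f g : R⟦X⟧} (h : f ≡ g [SMOD 𝔪[n]]) : coeff n f = coeff n g := by
  rw [SModEq.sub_mem, Ideal.mem_span_singleton, X_pow_dvd_iff] at h
  exact sub_eq_zero.mp (by simpa using h n n.lt_succ_self)

theorem X_pow_smodEq_zero {e : ℕ} (h : n < e) : (X ^ e : R⟦X⟧) ≡ 0 [SMOD 𝔪[n]] :=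
  SModEq.zero.mpr (Ideal.mem_span_singleton.mpr (pow_dvd_pow X h))

theorem one_sub_X_pow_smodEq_one {e : ℕ} (h : n < e) : (1 - X ^ e : R⟦X⟧) ≡ 1 [SMOD 𝔪[n]] := by
  simpa using (SModEq.refl (1 : R⟦X⟧)).sub (X_pow_smodEq_zero h)

theorem prod_range_one_sub_X_pow_smodEq {m m' : ℕ} (e : ℕ → ℕ) (hm : m ≤ m')
    (he : ∀ i ∈ Ico m m', n < e i) :
    ∏ i ∈ range m', (1 - X ^ e i : R⟦X⟧) ≡ ∏ i ∈ range m, (1 - X ^ e i) [SMOD 𝔪[n]] := by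
  have htail : ∏ i ∈ Ico m m', (1 - X ^ e i : R⟦X⟧) ≡ ∏ i ∈ Ico m m', 1 [SMOD 𝔪[n]] :=
    SModEq.prod fun i hi => one_sub_X_pow_smodEq_one (he i hi)
  rw [← prod_range_mul_prod_Ico _ hm]
  simpa using (SModEq.refl _).mul htail

end Truncation

theorem prod_range_mul_eq_prod_prod {M : Type*} [CommMonoid M] (f : ℕ → M) (s m : ℕ) :
    ∏ i ∈ range (s * m), f i = ∏ r ∈ range s, ∏ j ∈ range m, f (r + s * j) := by
  induction m with
  | zero => simp
  | succ m ih =>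
    rw [Nat.mul_succ, prod_range_add, ih, ← prod_mul_distrib]
    exact prod_congr rfl fun r _ => by rw [prod_range_succ, add_comm (s * m)]

theorem constantCoeff_qpoch {a : ℕ} (ha : a ≠ 0) (d : ℕ) : constantCoeff (qpoch a d) = 1 := by
  simpa [qpoch] using ha

theorem qpoch_smodEq_prod {a d n m : ℕ} (hd : d ≠ 0) (hm : n < m) :
    qpoch a d ≡ ∏ i ∈ range m, (1 - X ^ (a + d * i)) [SMOD 𝔪[n]] := by
  have stable (j m : ℕ) (hjm : j < m) : coeff j (∏ i ∈ range m, (1 - X ^ (a + d * i) : ℚ⟦X⟧)) =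
      coeff j (∏ i ∈ range (j + 1), (1 - X ^ (a + d * i))) :=
    coeff_eq_of_smodEq (prod_range_one_sub_X_pow_smodEq _ hjm fun i hi => by
      have := Nat.le_mul_of_pos_left i (Nat.pos_of_ne_zero hd)
      have := (mem_Ico.mp hi).1
      omega)
  rw [SModEq.sub_mem, Ideal.mem_span_singleton, X_pow_dvd_iff]
  intro j hj
  rw [map_sub, qpoch, coeff_mk, stable j m (by omega), sub_self]

theorem qpoch_eq_one_sub_mul (a : ℕ) {d : ℕ} (hd : d ≠ 0) :
    qpoch a d = (1 - X ^ a) * qpoch (a + d) d := by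
  ext n
  refine coeff_eq_of_smodEq ?_
  calc qpoch a d ≡ ∏ i ∈ range (n + 2), (1 - X ^ (a + d * i)) [SMOD 𝔪[n]] :=
        qpoch_smodEq_prod hd (by omega)
    _ = (1 - X ^ a) * ∏ i ∈ range (n + 1), (1 - X ^ (a + d + d * i)) := by
        rw [prod_range_succ', mul_comm]
        simp only [mul_add, mul_one, mul_zero, add_zero, add_assoc, add_comm (d * _) d]
    _ ≡ (1 - X ^ a) * qpoch (a + d) d [SMOD 𝔪[n]] :=
        (SModEq.refl _).mul (qpoch_smodEq_prod hd n.lt_succ_self).symm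

theorem qpoch_eq_prod_qpoch (a : ℕ) {d s : ℕ} (hd : d ≠ 0) (hs : s ≠ 0) :
    qpoch a d = ∏ r ∈ range s, qpoch (a + d * r) (d * s) := by
  ext n
  refine coeff_eq_of_smodEq ?_
  calc qpoch a d ≡ ∏ i ∈ range (s * (n + 1)), (1 - X ^ (a + d * i)) [SMOD 𝔪[n]] :=
        qpoch_smodEq_prod hd (by nlinarith [Nat.one_le_iff_ne_zero.mpr hs])
    _ = ∏ r ∈ range s, ∏ j ∈ range (n + 1), (1 - X ^ (a + d * r + d * s * j)) := by
        rw [prod_range_mul_eq_prod_prod]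
        simp only [mul_add, mul_assoc, add_assoc]
    _ ≡ ∏ r ∈ range s, qpoch (a + d * r) (d * s) [SMOD 𝔪[n]] :=
        SModEq.prod fun r _ => (qpoch_smodEq_prod (mul_ne_zero hd hs) n.lt_succ_self).symm

theorem inv_qpoch_mem_nonnegCoeffs {a d : ℕ} (ha : a ≠ 0) (hd : d ≠ 0) :
    (qpoch a d)⁻¹ ∈ nonnegCoeffs ℚ := fun n => by
  have hprod := constantCoeff_prod_one_sub_X_pow (R := ℚ) (range (n + 1))
    (e := fun i => a + d * i) fun _ _ => by omega
  rw [coeff_eq_of_smodEq (inv_smodEq_inv (qpoch_smodEq_prod hd n.lt_succ_self)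
    (by simp [constantCoeff_qpoch ha]) (by simp [hprod])), inv_prod]
  exact prod_mem (fun i _ => inv_one_sub_X_pow_mem_nonnegCoeffs (by omega)) n

theorem inv_qpoch_mul_one_sub {a d : ℕ} (ha : a ≠ 0) (hd : d ≠ 0) :
    (qpoch a d)⁻¹ * (1 - X ^ a) = (qpoch (a + d) d)⁻¹ := by
  rw [qpoch_eq_one_sub_mul a hd, PowerSeries.mul_inv_rev, mul_assoc,
    PowerSeries.inv_mul_cancel _ (by simp [ha]), mul_one]

theorem qpoch_mul_inv_qpoch_one_one_s19 {t : ℕ} (ht : t ≠ 0) :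
    qpoch t t * (qpoch 1 1)⁻¹ = (∏ r ∈ range (t - 1), qpoch (1 + r) t)⁻¹ := by
  obtain ⟨s, rfl⟩ := Nat.exists_eq_succ_of_ne_zero ht
  rw [qpoch_eq_prod_qpoch 1 one_ne_zero ht, prod_range_succ, PowerSeries.mul_inv_rev,
    ← mul_assoc]
  simp only [one_mul, Nat.succ_sub_one]
  rw [add_comm 1 s, PowerSeries.mul_inv_cancel _ (by simp [constantCoeff_qpoch]), one_mul]

theorem inv_prod_qpoch_mul_mem_nonnegCoeffs {t : ℕ} (ht : 3 ≤ t) :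
    (∏ r ∈ range (t - 1), qpoch (1 + r) t)⁻¹ * ((1 - X) * (1 - X ^ 2)) ∈ nonnegCoeffs ℚ := by
  obtain ⟨s, rfl⟩ := Nat.exists_eq_add_of_le' ht
  have ht0 : s + 3 ≠ 0 := by omega
  have hsplit : (∏ r ∈ range (s + 3 - 1), qpoch (1 + r) (s + 3))⁻¹ * ((1 - X) * (1 - X ^ 2))
      = (∏ r ∈ range s, (qpoch (r + 3) (s + 3))⁻¹)
        * ((qpoch 2 (s + 3))⁻¹ * (1 - X ^ 2)) * ((qpoch 1 (s + 3))⁻¹ * (1 - X ^ 1)) := by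
    rw [show s + 3 - 1 = s + 1 + 1 by omega, inv_prod, prod_range_succ', prod_range_succ']
    simp only [pow_one, zero_add, Nat.reduceAdd, show ∀ r, 1 + (r + 1 + 1) = r + 3 by omega]
    ring
  rw [hsplit, inv_qpoch_mul_one_sub two_ne_zero ht0, inv_qpoch_mul_one_sub one_ne_zero ht0]
  refine mul_mem (mul_mem (prod_mem fun r _ => ?_) ?_) ?_ <;>
    exact inv_qpoch_mem_nonnegCoeffs (by omega) ht0

section OddParts

variable (k : Type*) [Field k]

noncomputable def oddPartsGenFun (j : ℕ) : k⟦X⟧ := (∏ i ∈ range j, (1 - X ^ (3 + 2 * i)))⁻¹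

variable {k}

theorem constantCoeff_oddPartsGenFun (j : ℕ) : constantCoeff (oddPartsGenFun k j) = 1 := by
  rw [oddPartsGenFun, constantCoeff_inv,
    constantCoeff_prod_one_sub_X_pow _ fun _ _ => by omega, inv_one]

theorem oddPartsGenFun_succ_mul (j : ℕ) :
    oddPartsGenFun k (j + 1) * (1 - X ^ (3 + 2 * j)) = oddPartsGenFun k j := by
  rw [oddPartsGenFun, prod_range_succ, PowerSeries.mul_inv_rev, mul_comm, ← mul_assoc,
    PowerSeries.mul_inv_cancel _ (by simp), one_mul, oddPartsGenFun]

theorem one_sub_X_sq_add_X_pow_mul_oddPartsGenFun (j : ℕ) :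
    (1 - X ^ 2 + X ^ (2 * j + 3)) * oddPartsGenFun k j
      = 1 - X ^ 2 + X ^ 3 + ∑ i ∈ range j, X ^ (4 * i + 6) * oddPartsGenFun k (i + 1) := by
  induction j with
  | zero => simp [oddPartsGenFun]
  | succ j ih =>
    rw [sum_range_succ, ← add_assoc, ← ih, ← oddPartsGenFun_succ_mul j]
    ring

theorem X_pow_three_mul_inv_mul_eq (V : k⟦X⟧) :
    X ^ 3 * (1 - X ^ 3)⁻¹ * (1 - X ^ 2 + X ^ 14 + V)
      = X ^ 3 * (1 - X ^ 3)⁻¹ * (1 + V) - (X ^ 5 + X ^ 8 + X ^ 11 + X ^ 14) := by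
  have h : (1 - X ^ 3 : k⟦X⟧)⁻¹ * (1 - X ^ 3) = 1 := PowerSeries.inv_mul_cancel _ (by simp)
  linear_combination (-(X ^ 5 * (1 + X ^ 3 + X ^ 6 + X ^ 9) : k⟦X⟧)) * h

variable [LinearOrder k] [IsStrictOrderedRing k]

theorem oddPartsGenFun_mem_nonnegCoeffs (j : ℕ) : oddPartsGenFun k j ∈ nonnegCoeffs k := by
  rw [oddPartsGenFun, inv_prod]
  exact prod_mem fun i _ => inv_one_sub_X_pow_mem_nonnegCoeffs (by omega)

theorem exists_one_sub_X_sq_add_X_pow_mul_oddPartsGenFun_eq {j : ℕ} (hj : 3 ≤ j) :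
    ∃ V ∈ nonnegCoeffs k,
      (1 - X ^ 2 + X ^ (2 * j + 3)) * oddPartsGenFun k j = 1 - X ^ 2 + X ^ 14 + V := by
  have h2 : 2 ∈ range j := mem_range.mpr (by omega)
  refine ⟨X ^ 3 + X ^ 14 * (oddPartsGenFun k 3 - C (constantCoeff (oddPartsGenFun k 3)))
      + ∑ i ∈ (range j).erase 2, X ^ (4 * i + 6) * oddPartsGenFun k (i + 1), ?_, ?_⟩
  · refine add_mem (add_mem ?_ (mul_mem ?_ ?_)) (sum_mem fun i _ => mul_mem ?_ ?_)
    all_goals first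
      | exact pow_mem X_mem_nonnegCoeffs _
      | exact sub_C_constantCoeff_mem_nonnegCoeffs (oddPartsGenFun_mem_nonnegCoeffs 3)
      | exact oddPartsGenFun_mem_nonnegCoeffs _
  · rw [one_sub_X_sq_add_X_pow_mul_oddPartsGenFun, ← add_sum_erase _ _ h2,
      constantCoeff_oddPartsGenFun, map_one]
    ring

end OddParts

theorem exists_one_sub_X_sq_mul_inv_qpoch_smodEq (n : ℕ) :
    ∃ V ∈ nonnegCoeffs ℚ, (1 - X ^ 2) * (qpoch 3 2)⁻¹ ≡ 1 - X ^ 2 + X ^ 14 + V [SMOD 𝔪[n]] := by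
  obtain ⟨V, hV, hW⟩ :=
    exists_one_sub_X_sq_add_X_pow_mul_oddPartsGenFun_eq (k := ℚ) (j := n + 3) (by omega)
  have hE : (qpoch 3 2)⁻¹ ≡ oddPartsGenFun ℚ (n + 3) [SMOD 𝔪[n]] := by
    rw [oddPartsGenFun]
    exact inv_smodEq_inv (qpoch_smodEq_prod two_ne_zero (by omega))
      (by simp [constantCoeff_qpoch]) (by simp)
  have htail : (X ^ (2 * (n + 3) + 3) : ℚ⟦X⟧) ≡ 0 [SMOD 𝔪[n]] := X_pow_smodEq_zero (by omega)
  refine ⟨V, hV, ?_⟩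
  have hsplit :=
    (SModEq.refl ((1 - X ^ 2 + X ^ (2 * (n + 3) + 3)) * oddPartsGenFun ℚ (n + 3))).sub
      (htail.mul (SModEq.refl (oddPartsGenFun ℚ (n + 3))))
  -- `rw` on an `SModEq` goal would try to close it by `rfl`, unfolding the power series.
  rw [← sub_mul, add_sub_cancel_right, zero_mul, sub_zero, hW] at hsplit
  exact ((SModEq.refl _).mul hE).trans hsplit

theorem qpoch_two_mul_inv_qpoch_one_one_mul :
    qpoch 2 2 * (qpoch 1 1)⁻¹
        * (X ^ (3 * 2 - 3) * (1 + X ^ 3) * (1 - X) * (1 - X ^ 2) * (1 - X ^ (3 * 2))⁻¹)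
      = X ^ 3 * (1 - X ^ 3)⁻¹ * ((1 - X ^ 2) * (qpoch 3 2)⁻¹) := by
  have h6 : (1 + X ^ 3) * (1 - X ^ (3 * 2))⁻¹ = (1 - X ^ 3 : ℚ⟦X⟧)⁻¹ := by
    rw [eq_inv_iff_mul_eq_one (by simp)]
    calc (1 + X ^ 3) * (1 - X ^ (3 * 2))⁻¹ * (1 - X ^ 3)
        = (1 - X ^ (3 * 2))⁻¹ * (1 - X ^ (3 * 2) : ℚ⟦X⟧) := by ring
      _ = 1 := PowerSeries.inv_mul_cancel _ (by simp)
  have h1 := inv_qpoch_mul_one_sub one_ne_zero two_ne_zero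
  rw [pow_one, show 1 + 2 = 3 from rfl] at h1
  rw [qpoch_mul_inv_qpoch_one_one_s19 two_ne_zero, show 2 - 1 = 1 from rfl, prod_range_one,
    add_zero, ← h6, ← h1, show 3 * 2 - 3 = 3 from rfl]
  ring

theorem coeff_X_pow_three_mul_inv_mul_inv_qpoch_nonneg {n : ℕ}
    (hn : n ≠ 5 ∧ n ≠ 8 ∧ n ≠ 11 ∧ n ≠ 14) :
    0 ≤ coeff n (X ^ 3 * (1 - X ^ 3)⁻¹ * ((1 - X ^ 2) * (qpoch 3 2)⁻¹)) := by
  obtain ⟨V, hV, hcong⟩ := exists_one_sub_X_sq_mul_inv_qpoch_smodEq n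
  have hG : X ^ 3 * (1 - X ^ 3)⁻¹ * (1 + V) ∈ nonnegCoeffs ℚ :=
    mul_mem (mul_mem (pow_mem X_mem_nonnegCoeffs 3)
      (inv_one_sub_X_pow_mem_nonnegCoeffs three_ne_zero)) (add_mem (one_mem _) hV)
  have h := (SModEq.refl (X ^ 3 * (1 - X ^ 3 : ℚ⟦X⟧)⁻¹)).mul hcong
  rw [coeff_eq_of_smodEq (n := n) h, X_pow_three_mul_inv_mul_eq, map_sub]
  simp only [map_add, coeff_X_pow, hn, if_false, add_zero, sub_zero]
  exact hG n

theorem coeff_F_nonneg (t n : ℕ) (ht : 2 ≤ t)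
    (htn : (t, n) ∉ ({(2, 5), (2, 8), (2, 11), (2, 14)} : Set (ℕ × ℕ))) :
    0 ≤ PowerSeries.coeff (R := ℚ) n
      (qpoch t t * (qpoch 1 1)⁻¹
        * (X ^ (3 * t - 3) * (1 + X ^ 3) * (1 - X) * (1 - X ^ 2) * (1 - X ^ (3 * t))⁻¹)) := by
  obtain rfl | ht3 := ht.eq_or_lt
  · rw [qpoch_two_mul_inv_qpoch_one_one_mul]
    refine coeff_X_pow_three_mul_inv_mul_inv_qpoch_nonneg ?_
    simp only [Set.mem_insert_iff, Set.mem_singleton_iff, Prod.mk.injEq, true_and] at htn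
    tauto
  · have hrest : X ^ (3 * t - 3) * (1 + X ^ 3) * (1 - X ^ (3 * t))⁻¹ ∈ nonnegCoeffs ℚ :=
      mul_mem (mul_mem (pow_mem X_mem_nonnegCoeffs _)
        (add_mem (one_mem _) (pow_mem X_mem_nonnegCoeffs _)))
        (inv_one_sub_X_pow_mem_nonnegCoeffs (by omega))
    rw [qpoch_mul_inv_qpoch_one_one_s19 (by omega), show ∀ P : ℚ⟦X⟧,
      P * (X ^ (3 * t - 3) * (1 + X ^ 3) * (1 - X) * (1 - X ^ 2) * (1 - X ^ (3 * t))⁻¹)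
        = P * ((1 - X) * (1 - X ^ 2)) * (X ^ (3 * t - 3) * (1 + X ^ 3) * (1 - X ^ (3 * t))⁻¹)
      from fun P => by ring]
    exact mul_mem (inv_prod_qpoch_mul_mem_nonnegCoeffs ht3) hrest n
end
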